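/- arXiv:1212.1724 — 11 statements merged into one kernel-verified Lean document; each statement's English description precedes it below -/
import Mathlib

section
/- The relation →q is transitive: for finite simple graphs X, Y, Z, if there is a quantum homomorphism from X to Y and a quantum homomorphism from Y to Z, then there is a quantum homomorphism from X to Z. -/
open Matrix Finset Kronecker

/-- A quantum homomorphism from `X` to `Y`: for some `d ≥ 1` there are complex `d × d`
projectors `E x y` (Hermitian idempotents) with `∑ y, E x y = 1` for every `x`,
`E x y * E x y' = 0` whenever `y ≠ y'`, and `E x y * E x' y' = 0` whenever `x, x'`
are adjacent in `X` and `y, y'` are equal or nonadjacent in `Y`. -/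
def IsQuantumHom {V W : Type} [Fintype V] [Fintype W]
    (X : SimpleGraph V) (Y : SimpleGraph W) : Prop :=
  ∃ d : ℕ, 0 < d ∧ ∃ E : V → W → Matrix (Fin d) (Fin d) ℂ,
    (∀ x y, (E x y).IsHermitian ∧ E x y * E x y = E x y) ∧
    (∀ x, ∑ y, E x y = 1) ∧
    (∀ x y y', y ≠ y' → E x y * E x y' = 0) ∧
    (∀ x x' y y', X.Adj x x' → ¬ Y.Adj y y' → E x y * E x' y' = 0)

/-
If `E` realises `X →q Y` and `F` realises `Y →q Z`, then `x, z ↦ ∑ y, E x y ⊗ F y z` realises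
`X →q Z`. Expanding a product of two such sums gives terms `(E x y E x' y') ⊗ (F y z F y' z')`,
and in each term one of the two factors already vanishes by the relations of `E` or of `F`.
-/

namespace Matrix

variable {ι l m n p R : Type*}

theorem sum_kronecker [Fintype ι] [NonUnitalNonAssocSemiring R]
    (A : ι → Matrix l m R) (B : Matrix n p R) :
    (∑ i, A i) ⊗ₖ B = ∑ i, A i ⊗ₖ B := by
  classical
  induction (univ : Finset ι) using Finset.induction with
  | empty => simp
  | insert _ _ hi ih => simp only [sum_insert hi, add_kronecker, ih]

theorem kronecker_sum [Fintype ι] [NonUnitalNonAssocSemiring R]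
    (A : Matrix l m R) (B : ι → Matrix n p R) :
    A ⊗ₖ (∑ i, B i) = ∑ i, A ⊗ₖ B i := by
  classical
  induction (univ : Finset ι) using Finset.induction with
  | empty => simp
  | insert _ _ hi ih => simp only [sum_insert hi, kronecker_add, ih]

theorem sum_kronecker_mul_sum_kronecker [Fintype ι] [Fintype m] [Fintype n] [CommSemiring R]
    (A B : ι → Matrix m m R) (C D : ι → Matrix n n R) :
    (∑ i, A i ⊗ₖ C i) * (∑ j, B j ⊗ₖ D j) = ∑ i, ∑ j, (A i * B j) ⊗ₖ (C i * D j) := by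
  simp only [sum_mul_sum, mul_kronecker_mul]

theorem sum_kronecker_mul_sum_kronecker_eq_zero [Fintype ι] [Fintype m] [Fintype n]
    [CommSemiring R] {A B : ι → Matrix m m R} {C D : ι → Matrix n n R}
    (h : ∀ i j, A i * B j = 0 ∨ C i * D j = 0) :
    (∑ i, A i ⊗ₖ C i) * (∑ j, B j ⊗ₖ D j) = 0 := by
  rw [sum_kronecker_mul_sum_kronecker]
  refine sum_eq_zero fun i _ => sum_eq_zero fun j _ => ?_
  rcases h i j with h | h <;> simp [h]

end Matrix

/-- `IsQuantumHom` with the dimension `d` replaced by an arbitrary index type of the matrices. -/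
structure IsQuantumHomBy {V W ι : Type*} [Fintype W] [Fintype ι] [DecidableEq ι]
    (X : SimpleGraph V) (Y : SimpleGraph W) (E : V → W → Matrix ι ι ℂ) : Prop where
  isHermitian : ∀ x y, (E x y).IsHermitian
  mul_self : ∀ x y, E x y * E x y = E x y
  sum_eq_one : ∀ x, ∑ y, E x y = 1
  mul_eq_zero_of_ne : ∀ x {y y'}, y ≠ y' → E x y * E x y' = 0
  mul_eq_zero_of_adj_of_not_adj :
    ∀ {x x' y y'}, X.Adj x x' → ¬ Y.Adj y y' → E x y * E x' y' = 0

namespace IsQuantumHomBy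

variable {U V W ι κ : Type*} [Fintype ι] [DecidableEq ι] [Fintype κ] [DecidableEq κ]
  {X : SimpleGraph U} {Y : SimpleGraph V} {Z : SimpleGraph W}

theorem reindex [Fintype V] {E : U → V → Matrix ι ι ℂ}
    (hE : IsQuantumHomBy X Y E) (e : ι ≃ κ) :
    IsQuantumHomBy X Y fun x y => reindexAlgEquiv ℂ ℂ e (E x y) where
  isHermitian x y := (hE.isHermitian x y).submatrix _
  mul_self x y := by rw [← map_mul, hE.mul_self]
  sum_eq_one x := by rw [← map_sum, hE.sum_eq_one, map_one]
  mul_eq_zero_of_ne x _ _ h := by rw [← map_mul, hE.mul_eq_zero_of_ne x h, map_zero]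
  mul_eq_zero_of_adj_of_not_adj h h' := by
    rw [← map_mul, hE.mul_eq_zero_of_adj_of_not_adj h h', map_zero]

theorem comp [Fintype V] [Fintype W] {E : U → V → Matrix ι ι ℂ} {F : V → W → Matrix κ κ ℂ}
    (hE : IsQuantumHomBy X Y E) (hF : IsQuantumHomBy Y Z F) :
    IsQuantumHomBy X Z fun x z => ∑ y, E x y ⊗ₖ F y z where
  isHermitian x z := by
    simp only [IsHermitian, conjTranspose_sum, conjTranspose_kronecker,
      (hE.isHermitian _ _).eq, (hF.isHermitian _ _).eq]
  mul_self x z := by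
    rw [sum_kronecker_mul_sum_kronecker]
    refine sum_congr rfl fun y _ => ?_
    rw [sum_eq_single y (fun y' _ hy' => by rw [hE.mul_eq_zero_of_ne x hy'.symm, zero_kronecker])
      (by simp), hE.mul_self, hF.mul_self]
  sum_eq_one x := by
    simp only [sum_comm (γ := W), ← kronecker_sum, hF.sum_eq_one, ← sum_kronecker,
      hE.sum_eq_one, one_kronecker_one]
  mul_eq_zero_of_ne x z z' hz := by
    refine sum_kronecker_mul_sum_kronecker_eq_zero fun y y' => ?_
    obtain rfl | hy := eq_or_ne y y'
    · exact .inr (hF.mul_eq_zero_of_ne y hz)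
    · exact .inl (hE.mul_eq_zero_of_ne x hy)
  mul_eq_zero_of_adj_of_not_adj {x x' z z'} hx hz := by
    refine sum_kronecker_mul_sum_kronecker_eq_zero fun y y' => ?_
    by_cases hy : Y.Adj y y'
    · exact .inr (hF.mul_eq_zero_of_adj_of_not_adj hy hz)
    · exact .inl (hE.mul_eq_zero_of_adj_of_not_adj hx hy)

end IsQuantumHomBy

theorem isQuantumHom_iff_exists_isQuantumHomBy {V W : Type} [Fintype V] [Fintype W]
    {X : SimpleGraph V} {Y : SimpleGraph W} :
    IsQuantumHom X Y ↔ ∃ d, 0 < d ∧ ∃ E : V → W → Matrix (Fin d) (Fin d) ℂ,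
      IsQuantumHomBy X Y E :=
  ⟨fun ⟨d, hd, E, hP, h1, hne, hadj⟩ =>
    ⟨d, hd, E, ⟨fun x y => (hP x y).1, fun x y => (hP x y).2, h1, fun x _ _ => hne x _ _, hadj _ _ _ _⟩⟩,
   fun ⟨d, hd, E, hE⟩ =>
    ⟨d, hd, E, fun x y => ⟨hE.isHermitian x y, hE.mul_self x y⟩, hE.sum_eq_one,
      fun x _ _ => hE.mul_eq_zero_of_ne x, fun _ _ _ _ => hE.mul_eq_zero_of_adj_of_not_adj⟩⟩

/-- Quantum homomorphism is transitive. -/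
theorem isQuantumHom_trans {U V W : Type} [Fintype U] [Fintype V] [Fintype W]
    (X : SimpleGraph U) (Y : SimpleGraph V) (Z : SimpleGraph W)
    (hXY : IsQuantumHom X Y) (hYZ : IsQuantumHom Y Z) :
    IsQuantumHom X Z := by
  obtain ⟨d₁, hd₁, E, hE⟩ := isQuantumHom_iff_exists_isQuantumHomBy.mp hXY
  obtain ⟨d₂, hd₂, F, hF⟩ := isQuantumHom_iff_exists_isQuantumHomBy.mp hYZ
  exact isQuantumHom_iff_exists_isQuantumHomBy.mpr
    ⟨d₁ * d₂, Nat.mul_pos hd₁ hd₂, _, (hE.comp hF).reindex finProdFinEquiv⟩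
end

section
/- For positive integers m and n, there is a quantum homomorphism from the complete graph K_m to the complete graph K_n if and only if m ≤ n. -/
open Matrix Finset

/-! For a quantum homomorphism `K_m →q K_n` of dimension `d`, the `m` projectors `E x y` in a
fixed column `y` are pairwise orthogonal, so their sum is again a projector, whose trace is its
rank and hence at most `d`. Summing these traces over `y` and regrouping by rows, where
`∑ y, E x y = 1`, gives `m * d ≤ n * d`. Conversely the inclusion `Fin m ↪ Fin n` is an ordinary
graph homomorphism, which is a one-dimensional quantum homomorphism. -/

namespace Matrix

variable {K n : Type*} [Field K] [Fintype n] [DecidableEq n]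

theorem IsIdempotentElem.trace_eq_rank {P : Matrix n n K} (hP : IsIdempotentElem P) :
    P.trace = P.rank := by
  rw [← trace_toLin'_eq]
  exact (LinearMap.IsIdempotentElem.isProj_range _ (hP.map toLinAlgEquiv')).trace

theorem card_le_card_of_orthogonalIdempotents [CharZero K] [Nonempty n] {ι κ : Type*}
    [Fintype ι] [Fintype κ] (E : ι → κ → Matrix n n K) (hsum : ∀ i, ∑ j, E i j = 1)
    (hcol : ∀ j, OrthogonalIdempotents (E · j)) : Fintype.card ι ≤ Fintype.card κ := by
  have hcount : ∑ j, (∑ i, E i j).rank = Fintype.card ι * Fintype.card n := by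
    apply Nat.cast_injective (R := K)
    calc ((∑ j, (∑ i, E i j).rank : ℕ) : K)
        = ∑ j, (∑ i, E i j).trace := by
          push_cast
          exact Finset.sum_congr rfl fun j _ => ((hcol j).isIdempotentElem_sum).trace_eq_rank.symm
      _ = ∑ i, (∑ j, E i j).trace := by simp only [trace_sum]; exact Finset.sum_comm
      _ = _ := by simp [hsum]
  refine Nat.le_of_mul_le_mul_right ?_ (Fintype.card_pos (α := n))
  calc Fintype.card ι * Fintype.card n = ∑ j, (∑ i, E i j).rank := hcount.symm
    _ ≤ ∑ _j : κ, Fintype.card n := Finset.sum_le_sum fun j _ => rank_le_card_height _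
    _ = Fintype.card κ * Fintype.card n := by simp

end Matrix

theorem IsQuantumHom.of_hom {V W : Type} [Fintype V] [Fintype W] {X : SimpleGraph V}
    {Y : SimpleGraph W} (f : X →g Y) : IsQuantumHom X Y := by
  classical
  refine ⟨1, one_pos, fun x y => if f x = y then 1 else 0, fun x y => ?_, fun x => by simp,
    fun x y y' hne => ?_, fun x x' y y' hadj hnadj => ?_⟩
  all_goals dsimp only
  · split_ifs <;> simp [isHermitian_one]
  · split_ifs with h h' <;> simp_all
  · split_ifs with h h'
    · exact absurd (h ▸ h' ▸ f.map_adj hadj) hnadj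
    all_goals simp

theorem IsQuantumHom.card_le {V W : Type} [Fintype V] [Fintype W] {Y : SimpleGraph W}
    (h : IsQuantumHom (⊤ : SimpleGraph V) Y) : Fintype.card V ≤ Fintype.card W := by
  obtain ⟨d, hd, E, hproj, hsum, -, hadj⟩ := h
  have hcol (y : W) : OrthogonalIdempotents (E · y) :=
    ⟨fun x => (hproj x y).2, fun x x' hne => hadj x x' y y hne (Y.loopless.irrefl y)⟩
  have : Nonempty (Fin d) := ⟨⟨0, hd⟩⟩
  exact card_le_card_of_orthogonalIdempotents E hsum hcol

theorem quantumHom_complete_iff_general (m n : ℕ) :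
    IsQuantumHom (⊤ : SimpleGraph (Fin m)) (⊤ : SimpleGraph (Fin n)) ↔ m ≤ n :=
  ⟨fun h => by simpa using h.card_le,
    fun h => .of_hom (SimpleGraph.Embedding.completeGraph (Fin.castLEEmb h)).toHom⟩

/-- `K_m →q K_n` iff `m ≤ n`. -/
theorem quantumHom_complete_iff (m n : ℕ) (hm : 1 ≤ m) (hn : 1 ≤ n) :
    IsQuantumHom (⊤ : SimpleGraph (Fin m)) (⊤ : SimpleGraph (Fin n)) ↔ m ≤ n :=
  quantumHom_complete_iff_general m n
end

section
/- Let X be a connected finite simple graph and Y a finite simple graph. If there is a quantum homomorphism from X to Y, then there exists a connected component C of Y such that there is a quantum homomorphism from X to the subgraph of Y induced on the vertex set of C. -/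
open Matrix Finset

lemma exists_isometry {d : ℕ} (P : Matrix (Fin d) (Fin d) ℂ)
    (hH : P.IsHermitian) (hI : P * P = P) (hne : P ≠ 0) :
    ∃ r : ℕ, 0 < r ∧ ∃ B : Matrix (Fin d) (Fin r) ℂ,
      Bᴴ * B = 1 ∧ B * Bᴴ = P := by
  classical
  set U : Matrix (Fin d) (Fin d) ℂ := (hH.eigenvectorUnitary : Matrix (Fin d) (Fin d) ℂ) with hU
  set D : Matrix (Fin d) (Fin d) ℂ := diagonal (RCLike.ofReal ∘ hH.eigenvalues) with hDdef
  have hUU : star U * U = 1 := (Matrix.mem_unitaryGroup_iff').mp hH.eigenvectorUnitary.2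
  have hUU' : U * star U = 1 := (Matrix.mem_unitaryGroup_iff).mp hH.eigenvectorUnitary.2
  have hspec : P = U * D * star U := hH.spectral_theorem
  have hDeq : D = star U * P * U := by
    rw [hspec]
    calc D = (star U * U) * D * (star U * U) := by rw [hUU, Matrix.one_mul, Matrix.mul_one]
      _ = star U * (U * D * star U) * U := by simp only [Matrix.mul_assoc]
  have hDD : D * D = D := by
    conv_lhs => rw [hDeq]
    calc (star U * P * U) * (star U * P * U)
        = star U * (P * ((U * star U) * (P * U))) := by simp only [Matrix.mul_assoc]
      _ = star U * (P * (P * U)) := by rw [hUU', Matrix.one_mul]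
      _ = star U * ((P * P) * U) := by simp only [Matrix.mul_assoc]
      _ = D := by rw [hI, ← Matrix.mul_assoc, hDeq]
  have heig : ∀ i, hH.eigenvalues i = 0 ∨ hH.eigenvalues i = 1 := by
    intro i
    have h1 := congrFun (congrFun hDD i) i
    simp only [hDdef, Matrix.diagonal_mul_diagonal, Matrix.diagonal_apply_eq,
      Function.comp_apply, Pi.mul_apply] at h1
    have h3 : (hH.eigenvalues i) * (hH.eigenvalues i) = hH.eigenvalues i := by
      exact_mod_cast h1
    have h4 : hH.eigenvalues i * (hH.eigenvalues i - 1) = 0 := by linear_combination h3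
    rcases mul_eq_zero.mp h4 with h | h
    · exact Or.inl h
    · exact Or.inr (by linarith [h])
  set S : Finset (Fin d) := univ.filter (fun i => hH.eigenvalues i ≠ 0) with hS
  have hSne : S.Nonempty := by
    by_contra hc
    apply hne
    have hz : ∀ i, hH.eigenvalues i = 0 := by
      intro i
      by_contra hi
      exact hc ⟨i, by simp [hS, hi]⟩
    rw [hspec]
    have hdz : D = (0 : Matrix (Fin d) (Fin d) ℂ) := by
      rw [hDdef]
      ext i j
      by_cases h : i = j <;> simp [diagonal, h, hz]
    rw [hdz, Matrix.mul_zero, Matrix.zero_mul]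
  refine ⟨S.card, Finset.card_pos.mpr hSne, ?_⟩
  set e : Fin S.card ≃ {i // i ∈ S} := S.equivFin.symm with he
  refine ⟨Matrix.of (fun i j => U i (e j)), ?_, ?_⟩
  · ext j k
    have h1 : ((Matrix.of (fun i j => U i ((e j : {i // i ∈ S}) : Fin d)))ᴴ *
        (Matrix.of (fun i j => U i ((e j : {i // i ∈ S}) : Fin d)))) j k
        = (star U * U) (e j : Fin d) (e k : Fin d) := by
      simp only [Matrix.mul_apply, Matrix.conjTranspose_apply, Matrix.star_apply,
        Matrix.of_apply]
    rw [h1, hUU]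
    by_cases h : j = k
    · subst h; simp [Matrix.one_apply_eq]
    · have hne2 : (e j : Fin d) ≠ (e k : Fin d) := by
        intro hc
        exact h (e.injective (Subtype.ext hc))
      simp [Matrix.one_apply, hne2, h]
  · ext i k
    have hik := congrFun (congrFun hspec i) k
    have hRHS : P i k = ∑ s : Fin d, U i s * ((hH.eigenvalues s : ℝ) : ℂ) * star (U k s) := by
      rw [hik, Matrix.mul_apply]
      simp only [hDdef, Matrix.mul_diagonal, Matrix.star_apply, Function.comp_apply]
      norm_cast
    have hfilter : ∑ s ∈ S, U i s * ((hH.eigenvalues s : ℝ) : ℂ) * star (U k s)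
        = ∑ s : Fin d, U i s * ((hH.eigenvalues s : ℝ) : ℂ) * star (U k s) := by
      rw [hS]
      exact Finset.sum_filter_of_ne (fun s _ hfne heq => hfne (by simp [heq]))
    have h2 : ∑ s ∈ S, U i s * ((hH.eigenvalues s : ℝ) : ℂ) * star (U k s)
        = ∑ s ∈ S, U i s * star (U k s) := by
      apply Finset.sum_congr rfl
      intro s hs
      have h1 : hH.eigenvalues s = 1 := by
        rcases heig s with h | h
        · exfalso; rw [hS, Finset.mem_filter] at hs; exact hs.2 h
        · exact h
      simp [h1]
    calc (Matrix.of (fun i j => U i ((e j : {i // i ∈ S}) : Fin d)) *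
          (Matrix.of (fun i j => U i ((e j : {i // i ∈ S}) : Fin d)))ᴴ) i k
        = ∑ j : Fin S.card, U i (e j) * star (U k (e j)) := by
          simp only [Matrix.mul_apply, Matrix.conjTranspose_apply, Matrix.star_apply,
            Matrix.of_apply]
      _ = ∑ s : {x // x ∈ S}, U i (s : Fin d) * star (U k (s : Fin d)) :=
          Equiv.sum_comp e (fun s : {x // x ∈ S} => U i (s : Fin d) * star (U k (s : Fin d)))
      _ = ∑ s ∈ S, U i s * star (U k s) :=
          Finset.sum_coe_sort S (fun s => U i s * star (U k s))
      _ = P i k := by rw [← h2, hfilter, ← hRHS]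

/-- If `X` is connected and `X →q Y`, then `X` has a quantum homomorphism
to the subgraph of `Y` induced on some connected component of `Y`. -/
theorem quantumHom_to_component {V W : Type} [Fintype V] [Fintype W]
    (X : SimpleGraph V) (Y : SimpleGraph W)
    (hX : X.Connected) (h : IsQuantumHom X Y) :
    ∃ C : Y.ConnectedComponent,
      haveI : Fintype C.supp := C.supp.toFinite.fintype
      IsQuantumHom X (Y.induce C.supp) := by
  classical
  obtain ⟨d, hd, E, hproj, hsum, horth, hadj⟩ := h
  set P : V → Y.ConnectedComponent → Matrix (Fin d) (Fin d) ℂ :=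
    fun x C => ∑ y ∈ univ.filter (fun y => Y.connectedComponentMk y = C), E x y with hPdef
  have hEP : ∀ x y, E x y * P x (Y.connectedComponentMk y) = E x y := by
    intro x y
    rw [hPdef, Finset.mul_sum]
    have hmem : y ∈ univ.filter (fun y' => Y.connectedComponentMk y' = Y.connectedComponentMk y) :=
      Finset.mem_filter.mpr ⟨Finset.mem_univ y, rfl⟩
    rw [Finset.sum_eq_single_of_mem y hmem (fun y' _ hne => horth x y y' (Ne.symm hne))]
    exact (hproj x y).2
  have hPE : ∀ x y, P x (Y.connectedComponentMk y) * E x y = E x y := by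
    intro x y
    rw [hPdef, Finset.sum_mul]
    have hmem : y ∈ univ.filter (fun y' => Y.connectedComponentMk y' = Y.connectedComponentMk y) :=
      Finset.mem_filter.mpr ⟨Finset.mem_univ y, rfl⟩
    rw [Finset.sum_eq_single_of_mem y hmem (fun y' _ hne => horth x y' y hne)]
    exact (hproj x y).2
  have hzero1 : ∀ x x' C y, X.Adj x x' → Y.connectedComponentMk y ≠ C →
      P x C * E x' y = 0 := by
    intro x x' C y hxx hyC
    rw [hPdef, Finset.sum_mul]
    apply Finset.sum_eq_zero
    intro y' hy'
    rw [Finset.mem_filter] at hy'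
    apply hadj x x' y' y hxx
    intro hA
    exact hyC ((SimpleGraph.ConnectedComponent.connectedComponentMk_eq_of_adj hA).symm.trans hy'.2)
  have hzero2 : ∀ x x' C y, X.Adj x x' → Y.connectedComponentMk y ≠ C →
      E x y * P x' C = 0 := by
    intro x x' C y hxx hyC
    rw [hPdef, Finset.mul_sum]
    apply Finset.sum_eq_zero
    intro y' hy'
    rw [Finset.mem_filter] at hy'
    apply hadj x x' y y' hxx
    intro hA
    exact hyC ((SimpleGraph.ConnectedComponent.connectedComponentMk_eq_of_adj hA).trans hy'.2)
  have hkey1 : ∀ x x' C, X.Adj x x' → P x C = P x C * P x' C := by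
    intro x x' C hxx
    conv_lhs => rw [← mul_one (P x C), ← hsum x']
    rw [Finset.mul_sum]
    rw [← Finset.sum_filter_of_ne (p := fun y => Y.connectedComponentMk y = C)
      (fun y _ hfne => by
        by_contra hc
        exact hfne (hzero1 x x' C y hxx hc))]
    rw [← Finset.mul_sum]
  have hkey2 : ∀ x x' C, X.Adj x x' → P x' C = P x C * P x' C := by
    intro x x' C hxx
    conv_lhs => rw [← one_mul (P x' C), ← hsum x]
    rw [Finset.sum_mul]
    rw [← Finset.sum_filter_of_ne (p := fun y => Y.connectedComponentMk y = C)
      (fun y _ hfne => by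
        by_contra hc
        exact hfne (hzero2 x x' C y hxx hc))]
    rw [← Finset.sum_mul]
  have hadjinv : ∀ x x' C, X.Adj x x' → P x C = P x' C := by
    intro x x' C hxx
    rw [hkey1 x x' C hxx, ← hkey2 x x' C hxx]
  have hwalkinv : ∀ x x' C, X.Reachable x x' → P x C = P x' C := by
    intro x x' C hr
    obtain ⟨w⟩ := hr
    induction w with
    | nil => rfl
    | cons hA _ ih => exact (hadjinv _ _ C hA).trans ih
  obtain ⟨x0⟩ := hX.nonempty
  have hconst : ∀ x C, P x C = P x0 C := fun x C => hwalkinv x x0 C (hX.preconnected x x0)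
  have hone : (1 : Matrix (Fin d) (Fin d) ℂ) ≠ 0 := by
    intro hc
    have h1 := congrFun (congrFun hc ⟨0, hd⟩) ⟨0, hd⟩
    simp at h1
  have hEy : ∃ y, E x0 y ≠ 0 := by
    by_contra hc
    push_neg at hc
    apply hone
    rw [← hsum x0]
    exact Finset.sum_eq_zero (fun y _ => hc y)
  obtain ⟨y0, hy0⟩ := hEy
  set C : Y.ConnectedComponent := Y.connectedComponentMk y0 with hC
  have hPne : P x0 C ≠ 0 := by
    intro hc
    apply hy0
    rw [← hPE x0 y0, ← hC, hc, Matrix.zero_mul]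
  have hPH : (P x0 C).IsHermitian := by
    rw [hPdef, Matrix.IsHermitian, Matrix.conjTranspose_sum]
    exact Finset.sum_congr rfl (fun y _ => (hproj x0 y).1)
  have hPI : P x0 C * P x0 C = P x0 C := by
    conv_lhs => rw [hPdef]
    rw [Finset.sum_mul]
    conv_rhs => rw [hPdef]
    apply Finset.sum_congr rfl
    intro y hy
    rw [Finset.mem_filter] at hy
    calc E x0 y * P x0 C = E x0 y * P x0 (Y.connectedComponentMk y) := by rw [hy.2]
      _ = E x0 y := hEP x0 y
  obtain ⟨r, hr, B, hBB, hBB'⟩ := exists_isometry (P x0 C) hPH hPI hPne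
  have hEPc : ∀ x y, Y.connectedComponentMk y = C → E x y * P x0 C = E x y := by
    intro x y hyC
    rw [← hconst x C, ← hyC]
    exact hEP x y
  refine ⟨C, ?_⟩
  refine ⟨r, hr, fun x y => Bᴴ * E x (y : W) * B, ?_, ?_, ?_, ?_⟩
  · intro x y
    dsimp only
    constructor
    · rw [Matrix.IsHermitian, Matrix.conjTranspose_mul, Matrix.conjTranspose_mul,
        Matrix.conjTranspose_conjTranspose, (hproj x (y : W)).1, Matrix.mul_assoc]
    · have hy : Y.connectedComponentMk (y : W) = C :=
        (SimpleGraph.ConnectedComponent.mem_supp_iff C (y : W)).mp y.2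
      calc (Bᴴ * E x (y : W) * B) * (Bᴴ * E x (y : W) * B)
          = Bᴴ * (E x (y : W) * (B * Bᴴ) * E x (y : W)) * B := by
            simp only [Matrix.mul_assoc]
        _ = Bᴴ * (E x (y : W) * E x (y : W)) * B := by rw [hBB', hEPc x _ hy]
        _ = Bᴴ * E x (y : W) * B := by rw [(hproj x (y : W)).2, Matrix.mul_assoc]
  · intro x
    dsimp only
    rw [← Matrix.sum_mul, ← Matrix.mul_sum]
    have hsubgen : ∀ (s : Finset ↥C.supp), (∀ a, a ∈ s) →
        (∑ y ∈ s, E x (y : W)) = P x0 C := by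
      intro s hs
      rw [← hconst x C, hPdef]
      refine Finset.sum_bij (fun (a : ↥C.supp) _ => (a : W)) ?_ ?_ ?_ ?_
      · intro a _
        exact Finset.mem_filter.mpr ⟨Finset.mem_univ _,
          (SimpleGraph.ConnectedComponent.mem_supp_iff C (a : W)).mp a.2⟩
      · intro a _ b _ hab
        exact Subtype.ext hab
      · intro b hb
        rw [Finset.mem_filter] at hb
        exact ⟨⟨b, (SimpleGraph.ConnectedComponent.mem_supp_iff C b).mpr hb.2⟩, hs _, rfl⟩
      · intro a _
        rfl
    have hsub : ∑ y ∈ @Finset.univ ↥C.supp (C.supp.toFinite.fintype), E x (y : W) = P x0 C :=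
      hsubgen _ (fun a => @Finset.mem_univ _ (C.supp.toFinite.fintype) a)
    rw [hsub, ← hBB']
    calc Bᴴ * (B * Bᴴ) * B = (Bᴴ * B) * (Bᴴ * B) := by simp only [Matrix.mul_assoc]
      _ = 1 := by rw [hBB, one_mul]
  · intro x y y' hne
    dsimp only
    have hy : Y.connectedComponentMk (y : W) = C :=
      (SimpleGraph.ConnectedComponent.mem_supp_iff C (y : W)).mp y.2
    calc (Bᴴ * E x (y : W) * B) * (Bᴴ * E x (y' : W) * B)
        = Bᴴ * (E x (y : W) * (B * Bᴴ) * E x (y' : W)) * B := by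
          simp only [Matrix.mul_assoc]
      _ = Bᴴ * (E x (y : W) * E x (y' : W)) * B := by rw [hBB', hEPc x _ hy]
      _ = 0 := by
          rw [horth x (y : W) (y' : W) (fun hc => hne (Subtype.ext hc)),
            Matrix.mul_zero, Matrix.zero_mul]
  · intro x x' y y' hxx hnadj
    dsimp only
    have hy : Y.connectedComponentMk (y : W) = C :=
      (SimpleGraph.ConnectedComponent.mem_supp_iff C (y : W)).mp y.2
    have hnadj2 : ¬ Y.Adj (y : W) (y' : W) := by
      intro hA
      exact hnadj ((SimpleGraph.comap_adj).mpr hA)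
    calc (Bᴴ * E x (y : W) * B) * (Bᴴ * E x' (y' : W) * B)
        = Bᴴ * (E x (y : W) * (B * Bᴴ) * E x' (y' : W)) * B := by
          simp only [Matrix.mul_assoc]
      _ = Bᴴ * (E x (y : W) * E x' (y' : W)) * B := by rw [hBB', hEPc x _ hy]
      _ = 0 := by
          rw [hadj x x' (y : W) (y' : W) hxx hnadj2, Matrix.mul_zero, Matrix.zero_mul]
end

section
/- Let X and Y be finite simple graphs. There is a quantum homomorphism from X to Y if and only if there exist d ≥ 1 and a graph homomorphism from X to M(Y,d), where M(Y,d) is the simple graph whose vertices are the functions p : V(Y) → M_d(ℂ) such that every p(y) is a projector (Hermitian idempotent) and Σ_{y ∈ V(Y)} p(y) = I, with distinct vertices p and p' adjacent if and only if p(y)·p'(y') = 0 for all pairs y, y' ∈ V(Y) that are equal or nonadjacent in Y. -/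
/-! A projective measurement is automatically orthogonal: for `j ≠ k` the positive element
`(p j * p k)ᴴ * (p j * p k) = p k * p j * p k` is one of the summands of
`p k * (1 - p k) * p k = 0`. So a quantum homomorphism is a family of measurements `E x` whose
remaining condition says exactly that `x ↦ E x` maps edges of `X` to edges of `M(Y,d)`; adjacent
`x, x'` cannot carry the same measurement, since `E x y * E x y = 0` for every `y` would give
`1 = ∑ y, E x y = 0`. -/

open Matrix Finset

/-- The graph `M(Y,d)`: vertices are projective measurements `p : V(Y) → M_d(ℂ)`
(each `p y` a projector, summing to the identity), with distinct `p, p'` adjacent iff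
`p y * p' y' = 0` for all pairs `y, y'` that are equal or nonadjacent in `Y`. -/
def MGraph {W : Type} [Fintype W] (Y : SimpleGraph W) (d : ℕ) :
    SimpleGraph {p : W → Matrix (Fin d) (Fin d) ℂ //
      (∀ y, (p y).IsHermitian ∧ p y * p y = p y) ∧ ∑ y, p y = 1} where
  Adj p q := p ≠ q ∧ ∀ y y', ¬ Y.Adj y y' → p.1 y * q.1 y' = 0
  symm := ⟨by
    rintro ⟨p, hp, _⟩ ⟨q, hq, _⟩ ⟨hne, h⟩
    refine ⟨hne.symm, fun y y' hyy' => ?_⟩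
    have h1 : p y' * q y = 0 := h y' y (fun a => hyy' a.symm)
    have h2 := congrArg Matrix.conjTranspose h1
    show q y * p y' = 0
    rwa [Matrix.conjTranspose_mul, (hq y).1, (hp y').1, Matrix.conjTranspose_zero] at h2⟩
  loopless := ⟨fun p hp => hp.1 rfl⟩

open scoped MatrixOrder ComplexOrder in
theorem Matrix.mul_eq_zero_of_isStarProjection_of_sum_eq_one {ι m 𝕜 : Type*} [Fintype ι]
    [Fintype m] [DecidableEq m] [RCLike 𝕜] {p : ι → Matrix m m 𝕜}
    (hp : ∀ i, IsStarProjection (p i)) (hsum : ∑ i, p i = 1) {i j : ι} (hij : i ≠ j) :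
    p i * p j = 0 := by
  classical
  have hsandwich (k : ι) : star (p k * p j) * (p k * p j) = p j * p k * p j := by
    rw [star_mul, (hp j).isSelfAdjoint.star_eq, (hp k).isSelfAdjoint.star_eq, mul_assoc,
      ← mul_assoc (p k), (hp k).isIdempotentElem.eq, mul_assoc]
  have htotal : ∑ k, p j * p k * p j = p j := by
    rw [← sum_mul, ← mul_sum, hsum, mul_one, (hp j).isIdempotentElem.eq]
  rw [← add_sum_erase _ _ (mem_univ j), (hp j).isIdempotentElem.eq,
    (hp j).isIdempotentElem.eq, add_eq_left] at htotal
  simp only [← hsandwich] at htotal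
  have hi := (sum_eq_zero_iff_of_nonneg fun k _ => star_mul_self_nonneg (p k * p j)).1 htotal i
    (mem_erase.2 ⟨hij, mem_univ i⟩)
  exact conjTranspose_mul_self_eq_zero.1 hi

theorem exists_mul_self_ne_zero_of_sum_eq_one {ι R : Type*} [Fintype ι] [Semiring R]
    [Nontrivial R] {p : ι → R} (hp : ∀ i, IsIdempotentElem (p i)) (hsum : ∑ i, p i = 1) :
    ∃ i, p i * p i ≠ 0 := by
  by_contra! h
  simp only [fun i => (hp i).eq ▸ h i, sum_const_zero] at hsum
  exact zero_ne_one hsum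

/-- `X →q Y` iff `X` has a graph homomorphism to `M(Y,d)` for some `d ≥ 1`. -/
theorem quantumHom_iff_hom_MGraph {V W : Type} [Fintype V] [Fintype W]
    (X : SimpleGraph V) (Y : SimpleGraph W) :
    IsQuantumHom X Y ↔ ∃ d : ℕ, 1 ≤ d ∧ Nonempty (X →g MGraph Y d) := by
  constructor
  · rintro ⟨d, hd, E, hproj, hsum, -, hadj⟩
    have : NeZero d := ⟨hd.ne'⟩
    refine ⟨d, hd, ⟨⟨fun x => ⟨E x, hproj x, hsum x⟩, fun {x x'} hxx' => ⟨fun heq => ?_,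
      fun y y' => hadj x x' y y' hxx'⟩⟩⟩⟩
    obtain ⟨y, hy⟩ := exists_mul_self_ne_zero_of_sum_eq_one (fun y => (hproj x y).2) (hsum x)
    have hE : E x = E x' := congrArg Subtype.val heq
    exact hy (hE ▸ hadj x x' y y hxx' (Y.loopless.irrefl y))
  · rintro ⟨d, hd, ⟨f⟩⟩
    exact ⟨d, hd, fun x => (f x).1, fun x => (f x).2.1, fun x => (f x).2.2,
      fun x _ _ => Matrix.mul_eq_zero_of_isStarProjection_of_sum_eq_one
        (fun y => ⟨((f x).2.1 y).2, ((f x).2.1 y).1⟩) (f x).2.2,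
      fun _ _ y y' hxx' => (f.map_rel hxx').2 y y'⟩
end

section
/- Let X and Y be finite simple graphs, α < 0, and suppose there is a quantum homomorphism from X to Y. If for some m ≥ 1 there exist unit vectors v_y ∈ ℝ^m (y ∈ V(Y)) with v_y · v_{y'} = α whenever y,y' are adjacent in Y, then for some m' ≥ 1 there exist unit vectors u_x ∈ ℝ^{m'} (x ∈ V(X)) with u_x · u_{x'} = α whenever x,x' are adjacent in X. Consequently ϑ̄(X) ≤ ϑ̄(Y). -/
open Matrix Finset

/-- Quantum homomorphisms preserve the existence of `α`-representations
(so `ϑ̄(X) ≤ ϑ̄(Y)` whenever `X →q Y`). -/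
theorem alphaRep_of_quantumHom {V W : Type} [Fintype V] [Fintype W]
    (X : SimpleGraph V) (Y : SimpleGraph W) (α : ℝ) (hα : α < 0)
    (hq : IsQuantumHom X Y)
    (hY : ∃ m : ℕ, 1 ≤ m ∧ ∃ v : W → (Fin m → ℝ),
      (∀ y, ∑ i, v y i * v y i = 1) ∧
      (∀ y y', Y.Adj y y' → ∑ i, v y i * v y' i = α)) :
    ∃ m' : ℕ, 1 ≤ m' ∧ ∃ u : V → (Fin m' → ℝ),
      (∀ x, ∑ i, u x i * u x i = 1) ∧
      (∀ x x', X.Adj x x' → ∑ i, u x i * u x' i = α) := by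
  obtain ⟨d, hd, E, hproj, hsum, horth, hadj⟩ := hq
  obtain ⟨m, hm, v, hv1, hv2⟩ := hY
  have herm : ∀ x y (i j : Fin d), (starRingEnd ℂ) (E x y i j) = E x y j i := by
    intro x y i j
    have h2 := congrFun (congrFun (hproj x y).1 j) i
    simpa [Matrix.conjTranspose_apply] using h2
  set A : V → Fin d → Fin d → Fin m → ℂ :=
    fun x i j k => ∑ y, E x y i j * ((v y k : ℝ) : ℂ) with hA
  have htr : ∀ (M N : Matrix (Fin d) (Fin d) ℂ),
      (M * N).trace = ∑ j, ∑ i, M j i * N i j := by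
    intro M N
    simp [Matrix.trace, Matrix.diag, Matrix.mul_apply]
  -- reorder five nested sums
  have reorder : ∀ (f : Fin d → Fin d → Fin m → W → W → ℂ),
      ∑ i, ∑ j, ∑ k, ∑ y, ∑ y', f i j k y y'
        = ∑ y, ∑ y', ∑ j, ∑ i, ∑ k, f i j k y y' := by
    intro f
    calc ∑ i, ∑ j, ∑ k, ∑ y, ∑ y', f i j k y y'
        = ∑ i, ∑ j, ∑ y, ∑ y', ∑ k, f i j k y y' := by
          refine Finset.sum_congr rfl fun i _ => Finset.sum_congr rfl fun j _ => ?_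
          rw [Finset.sum_comm]
          exact Finset.sum_congr rfl fun y _ => Finset.sum_comm
      _ = ∑ i, ∑ y, ∑ y', ∑ j, ∑ k, f i j k y y' := by
          refine Finset.sum_congr rfl fun i _ => ?_
          rw [Finset.sum_comm]
          exact Finset.sum_congr rfl fun y _ => Finset.sum_comm
      _ = ∑ y, ∑ y', ∑ i, ∑ j, ∑ k, f i j k y y' := by
          rw [Finset.sum_comm]
          exact Finset.sum_congr rfl fun y _ => Finset.sum_comm
      _ = ∑ y, ∑ y', ∑ j, ∑ i, ∑ k, f i j k y y' :=
          Finset.sum_congr rfl fun y _ => Finset.sum_congr rfl fun y' _ => Finset.sum_comm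
  have key : ∀ x x' : V,
      (∑ i, ∑ j, ∑ k, (starRingEnd ℂ) (A x i j k) * A x' i j k)
        = ∑ y, ∑ y', (E x y * E x' y').trace * ((∑ k, v y k * v y' k : ℝ) : ℂ) := by
    intro x x'
    have expand : ∀ (i j : Fin d) (k : Fin m),
        (starRingEnd ℂ) (A x i j k) * A x' i j k
          = ∑ y, ∑ y', (E x y j i * E x' y' i j) * (((v y k * v y' k : ℝ)) : ℂ) := by
      intro i j k
      simp only [hA, map_sum, _root_.map_mul, herm, Complex.conj_ofReal]
      rw [Finset.sum_mul_sum]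
      refine Finset.sum_congr rfl fun y _ => Finset.sum_congr rfl fun y' _ => ?_
      push_cast
      ring
    calc (∑ i, ∑ j, ∑ k, (starRingEnd ℂ) (A x i j k) * A x' i j k)
        = ∑ i, ∑ j, ∑ k, ∑ y, ∑ y', (E x y j i * E x' y' i j) * (((v y k * v y' k : ℝ)) : ℂ) := by
          simp only [expand]
      _ = ∑ y, ∑ y', ∑ j, ∑ i, ∑ k, (E x y j i * E x' y' i j) * (((v y k * v y' k : ℝ)) : ℂ) :=
          reorder _
      _ = ∑ y, ∑ y', (∑ j, ∑ i, E x y j i * E x' y' i j) * ((∑ k, v y k * v y' k : ℝ) : ℂ) := by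
          refine Finset.sum_congr rfl fun y _ => Finset.sum_congr rfl fun y' _ => ?_
          rw [Complex.ofReal_sum, Finset.sum_mul]
          refine Finset.sum_congr rfl fun j _ => ?_
          rw [Finset.sum_mul]
          refine Finset.sum_congr rfl fun i _ => ?_
          rw [Finset.mul_sum]
      _ = ∑ y, ∑ y', (E x y * E x' y').trace * ((∑ k, v y k * v y' k : ℝ) : ℂ) := by
          simp [htr]
  -- total trace sum
  have htot : ∀ x x' : V, ∑ y, ∑ y', (E x y * E x' y').trace = (d : ℂ) := by
    intro x x'
    have h1 : ∑ y, ∑ y', (E x y * E x' y').trace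
        = ((∑ y, E x y) * (∑ y', E x' y')).trace := by
      rw [Finset.sum_mul_sum]
      simp [Matrix.trace_sum]
    rw [h1, hsum, hsum, one_mul, Matrix.trace_one]
    simp
  -- self inner product
  have hself : ∀ x : V,
      (∑ i, ∑ j, ∑ k, (starRingEnd ℂ) (A x i j k) * A x i j k) = (d : ℂ) := by
    intro x
    rw [key x x]
    have h1 : ∀ y : W,
        ∑ y', (E x y * E x y').trace * ((∑ k, v y k * v y' k : ℝ) : ℂ) = (E x y).trace := by
      intro y
      rw [Finset.sum_eq_single y]
      · rw [(hproj x y).2, hv1 y]; simp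
      · intro y' _ hne
        rw [horth x y y' (Ne.symm hne)]  -- careful: order
        simp
      · intro h; exact absurd (Finset.mem_univ y) h
    rw [Finset.sum_congr rfl fun y _ => h1 y, ← Matrix.trace_sum, hsum, Matrix.trace_one]
    simp
  -- adjacent inner product
  have hadj2 : ∀ x x' : V, X.Adj x x' →
      (∑ i, ∑ j, ∑ k, (starRingEnd ℂ) (A x i j k) * A x' i j k) = (α : ℂ) * d := by
    intro x x' hxx
    rw [key x x']
    have h1 : ∀ y y' : W,
        (E x y * E x' y').trace * ((∑ k, v y k * v y' k : ℝ) : ℂ)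
          = (α : ℂ) * (E x y * E x' y').trace := by
      intro y y'
      by_cases hyy : Y.Adj y y'
      · rw [hv2 y y' hyy]; ring
      · rw [hadj x x' y y' hxx hyy]; simp
    calc ∑ y, ∑ y', (E x y * E x' y').trace * ((∑ k, v y k * v y' k : ℝ) : ℂ)
        = ∑ y, ∑ y', (α : ℂ) * (E x y * E x' y').trace := by
          exact Finset.sum_congr rfl fun y _ => Finset.sum_congr rfl fun y' _ => h1 y y'
      _ = (α : ℂ) * ∑ y, ∑ y', (E x y * E x' y').trace := by
          simp [Finset.mul_sum]
      _ = (α : ℂ) * d := by rw [htot]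
  -- realification
  set u0 : V → (Fin d × Fin d × Fin m × Bool) → ℝ :=
    fun x p => (Real.sqrt d)⁻¹ *
      (if p.2.2.2 then (A x p.1 p.2.1 p.2.2.1).re else (A x p.1 p.2.1 p.2.2.1).im) with hu0
  have hdR : (0:ℝ) < d := by exact_mod_cast hd
  have hsq : ((Real.sqrt d)⁻¹ : ℝ) * (Real.sqrt d)⁻¹ = (d : ℝ)⁻¹ := by
    rw [← mul_inv]
    rw [Real.mul_self_sqrt hdR.le]
  have inner_eq : ∀ x x' : V,
      ∑ p : Fin d × Fin d × Fin m × Bool, u0 x p * u0 x' p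
        = (d:ℝ)⁻¹ * (∑ i, ∑ j, ∑ k, (starRingEnd ℂ) (A x i j k) * A x' i j k).re := by
    intro x x'
    rw [Fintype.sum_prod_type]
    simp only [Fintype.sum_prod_type]
    have hre : ∀ i j k, ((starRingEnd ℂ) (A x i j k) * A x' i j k).re
        = (A x i j k).re * (A x' i j k).re + (A x i j k).im * (A x' i j k).im := by
      intro i j k
      simp [Complex.mul_re]
    calc ∑ i, ∑ j, ∑ k, ∑ b : Bool, u0 x (i, j, k, b) * u0 x' (i, j, k, b)
        = ∑ i, ∑ j, ∑ k, (d:ℝ)⁻¹ *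
            ((A x i j k).re * (A x' i j k).re + (A x i j k).im * (A x' i j k).im) := by
          refine Finset.sum_congr rfl fun i _ => Finset.sum_congr rfl fun j _ =>
            Finset.sum_congr rfl fun k _ => ?_
          simp only [hu0]
          rw [Fintype.sum_bool, if_pos rfl, if_pos rfl,
            if_neg (by decide : ¬ (false = true)), if_neg (by decide : ¬ (false = true))]
          rw [← hsq]; ring
      _ = (d:ℝ)⁻¹ * ∑ i, ∑ j, ∑ k,
            ((A x i j k).re * (A x' i j k).re + (A x i j k).im * (A x' i j k).im) := by
          simp [Finset.mul_sum]
      _ = (d:ℝ)⁻¹ * (∑ i, ∑ j, ∑ k, (starRingEnd ℂ) (A x i j k) * A x' i j k).re := by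
          rw [Complex.re_sum]
          congr 1
          refine Finset.sum_congr rfl fun i _ => ?_
          rw [Complex.re_sum]
          refine Finset.sum_congr rfl fun j _ => ?_
          rw [Complex.re_sum]
          exact Finset.sum_congr rfl fun k _ => (hre i j k).symm
  -- assemble
  haveI : NeZero d := ⟨hd.ne'⟩
  have hne : Nonempty (Fin d × Fin d × Fin m × Bool) := by
    haveI : NeZero m := ⟨by omega⟩
    infer_instance
  refine ⟨Fintype.card (Fin d × Fin d × Fin m × Bool), Fintype.card_pos, ?_⟩
  set e := Fintype.equivFin (Fin d × Fin d × Fin m × Bool) with he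
  refine ⟨fun x i => u0 x (e.symm i), ?_, ?_⟩
  · intro x
    have := Equiv.sum_comp e.symm (fun p => u0 x p * u0 x p)
    have hdne : (d:ℝ) ≠ 0 := hdR.ne'
    rw [this, inner_eq x x, hself x, Complex.natCast_re]
    field_simp
  · intro x x' hxx
    have := Equiv.sum_comp e.symm (fun p => u0 x p * u0 x' p)
    rw [this, inner_eq x x', hadj2 x x' hxx]
    have : ((α : ℂ) * (d:ℂ)).re = α * d := by
      simp [Complex.mul_re]
    have hdne : (d:ℝ) ≠ 0 := hdR.ne'
    rw [this]
    field_simp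
end

section
/- Let X be a finite simple graph and c ≥ 2 an integer. If there is a quantum homomorphism from X to the complete graph K_c, then for some m ≥ 1 there exist unit vectors u_x ∈ ℝ^m (x ∈ V(X)) with u_x · u_{x'} = −1/(c−1) whenever x,x' are adjacent in X. In other words, ϑ̄(X) ≤ χ_q(X). -/
open Matrix Finset

/-!
Let `s_1, …, s_c ∈ ℝ^c` be the vertices of a regular simplex centred at the origin, so that
`⟨s_y, s_y⟩ = 1` and `⟨s_y, s_y'⟩ = -1/(c-1)` for `y ≠ y'`. Viewing complex `d × d` matrices as real
vectors with inner product `Re tr(A Bᴴ)`, put `u_x = d^{-1/2} ∑_y s_y ⊗ E_{x,y}`. Then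
`⟨u_x, u_x'⟩ = ∑_{y,y'} ⟨s_y, s_y'⟩ p(y, y')` with weights `p(y, y') = Re tr(E_{x,y} E_{x',y'}) / d`
summing to `1`, because `∑_y E_{x,y} = I`. The weights vanish off the diagonal `y = y'` when `x = x'`
(orthogonality of the `E_{x,·}`) and on it when `x ~ x'` (the homomorphism condition), which gives
the inner products `1` and `-1/(c-1)`.
-/

noncomputable def simplexVector (c : ℕ) (y : Fin c) : Fin c → ℝ :=
  √((c : ℝ) / (c - 1)) • (Pi.single y 1 - fun _ => (c : ℝ)⁻¹)

theorem simplexVector_dotProduct {c : ℕ} (hc : 2 ≤ c) (y y' : Fin c) :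
    simplexVector c y ⬝ᵥ simplexVector c y' = if y = y' then 1 else -1 / ((c : ℝ) - 1) := by
  have hc' : (2 : ℝ) ≤ c := by exact_mod_cast hc
  have hc1 : (c : ℝ) - 1 ≠ 0 := by linarith
  have hsq : √((c : ℝ) / (c - 1)) * √((c : ℝ) / (c - 1)) = c / (c - 1) :=
    Real.mul_self_sqrt (div_nonneg (by linarith) (by linarith))
  rw [simplexVector, simplexVector, smul_dotProduct, dotProduct_smul, smul_smul, hsq,
    sub_dotProduct, dotProduct_sub, dotProduct_sub, single_dotProduct, dotProduct_single,
    single_dotProduct]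
  simp only [dotProduct, sum_const, card_univ, Fintype.card_fin, nsmul_eq_mul, Pi.single_apply,
    smul_eq_mul]
  split_ifs <;> field_simp <;> ring

def Matrix.realCoords {m n : Type*} (A : Matrix m n ℂ) : m × n × Bool → ℝ :=
  fun p => if p.2.2 then (A p.1 p.2.1).re else (A p.1 p.2.1).im

theorem Matrix.realCoords_dotProduct {m n : Type*} [Fintype m] [Fintype n]
    (A B : Matrix m n ℂ) : A.realCoords ⬝ᵥ B.realCoords = (A * Bᴴ).trace.re := by
  simp [realCoords, dotProduct, Fintype.sum_prod_type, trace, mul_apply, Complex.re_sum,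
    Complex.mul_re]

theorem dotProduct_sum_tensor {ι κ μ R : Type*} [Fintype ι] [Fintype κ] [Fintype μ]
    [CommSemiring R] (s s' : ι → κ → R) (v w : ι → μ → R) :
    (fun p : κ × μ => ∑ y, s y p.1 * v y p.2) ⬝ᵥ (fun p => ∑ y, s' y p.1 * w y p.2)
      = ∑ y, ∑ y', (s y ⬝ᵥ s' y') * (v y ⬝ᵥ w y') := by
  simp only [dotProduct, sum_mul_sum]
  rw [sum_comm]
  refine sum_congr rfl fun y _ => ?_
  rw [sum_comm]
  refine sum_congr rfl fun y' _ => ?_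
  rw [Fintype.sum_prod_type]
  exact sum_congr rfl fun i _ => sum_congr rfl fun j _ => by ring

theorem dotProduct_sum_tensor_realCoords {ι κ n : Type*} [Fintype ι] [Fintype κ] [Fintype n]
    [DecidableEq n] (s : ι → κ → ℝ) {E F : ι → Matrix n n ℂ} (hE : ∑ y, E y = 1)
    (hF : ∑ y, F y = 1) (hF_herm : ∀ y, (F y).IsHermitian) {a : ℝ}
    (ha : ∀ y y', E y * F y' ≠ 0 → s y ⬝ᵥ s y' = a) :
    (fun p : κ × _ => ∑ y, s y p.1 * (E y).realCoords p.2) ⬝ᵥ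
        (fun p => ∑ y, s y p.1 * (F y).realCoords p.2) = a * Fintype.card n := by
  have htrace : ∑ y, ∑ y', (E y * F y').trace.re = Fintype.card n := by
    simp_rw [← Complex.re_sum, ← trace_sum, ← sum_mul_sum, hE, hF, mul_one, trace_one]
    simp
  rw [dotProduct_sum_tensor, ← htrace, mul_sum]
  refine sum_congr rfl fun y _ => ?_
  rw [mul_sum]
  refine sum_congr rfl fun y' _ => ?_
  rw [realCoords_dotProduct, (hF_herm y').eq]
  by_cases h : E y * F y' = 0
  · simp [h]
  · rw [ha y y' h]

/-- If `X →q K_c` (with `c ≥ 2`), then `X` has a `(-1/(c-1))`-representation;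
in other words `ϑ̄(X) ≤ χ_q(X)`. -/
theorem alphaRep_of_quantum_coloring {V : Type} [Fintype V]
    (X : SimpleGraph V) (c : ℕ) (hc : 2 ≤ c)
    (hq : IsQuantumHom X (⊤ : SimpleGraph (Fin c))) :
    ∃ m : ℕ, 1 ≤ m ∧ ∃ u : V → (Fin m → ℝ),
      (∀ x, ∑ i, u x i * u x i = 1) ∧
      (∀ x x', X.Adj x x' → ∑ i, u x i * u x' i = -1 / ((c : ℝ) - 1)) := by
  obtain ⟨d, hd, E, hproj, hsum, horth, hadj⟩ := hq
  have : NeZero c := ⟨by omega⟩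
  have : NeZero d := ⟨hd.ne'⟩
  let u (x : V) : Fin c × Fin d × Fin d × Bool → ℝ :=
    (√d)⁻¹ • fun p => ∑ y, simplexVector c y p.1 * (E x y).realCoords p.2
  have hu {x x' : V} {a : ℝ}
      (ha : ∀ y y', E x y * E x' y' ≠ 0 → simplexVector c y ⬝ᵥ simplexVector c y' = a) :
      u x ⬝ᵥ u x' = a := by
    rw [smul_dotProduct, dotProduct_smul, smul_smul, smul_eq_mul, ← mul_inv,
      Real.mul_self_sqrt d.cast_nonneg,
      dotProduct_sum_tensor_realCoords _ (hsum x) (hsum x') (fun y => (hproj x' y).1) ha,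
      Fintype.card_fin]
    field_simp
  let e := Fintype.equivFin (Fin c × Fin d × Fin d × Bool)
  refine ⟨_, Fintype.card_pos, fun x => u x ∘ e.symm, fun x => ?_, fun x x' hxx => ?_⟩
  · refine (comp_equiv_dotProduct_comp_equiv _ _ _).trans (hu fun y y' h => ?_)
    rw [simplexVector_dotProduct hc, if_pos (not_imp_comm.1 (horth x y y') h)]
  · refine (comp_equiv_dotProduct_comp_equiv _ _ _).trans (hu fun y y' h => ?_)
    have hne : y ≠ y' := by
      rintro rfl
      exact h (hadj x x' y y hxx (by simp))
    rw [simplexVector_dotProduct hc, if_neg hne]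
end

section
/- For finite simple graphs X and Y, there is a graph homomorphism from X to Y if and only if the independence number of the homomorphic product X ⋉ Y equals |V(X)|. -/
open Matrix Finset

/-- The homomorphic product `X ⋉ Y`: distinct vertices `(x,y)` and `(x',y')` are adjacent
iff `x = x'`, or (`x ~ x'` in `X` and `y, y'` are equal or nonadjacent in `Y`). -/
def homProd {V W : Type} (X : SimpleGraph V) (Y : SimpleGraph W) :
    SimpleGraph (V × W) where
  Adj a b := a ≠ b ∧ (a.1 = b.1 ∨ (X.Adj a.1 b.1 ∧ ¬ Y.Adj a.2 b.2))
  symm := ⟨by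
    rintro a b ⟨hne, h⟩
    refine ⟨hne.symm, ?_⟩
    rcases h with h | ⟨h1, h2⟩
    · exact Or.inl h.symm
    · exact Or.inr ⟨h1.symm, fun hb => h2 hb.symm⟩⟩
  loopless := ⟨fun a ha => ha.1 rfl⟩

/-- The independence number: the largest size of a set of pairwise nonadjacent vertices. -/
noncomputable def indepNum {U : Type} [Fintype U] (Z : SimpleGraph U) : ℕ :=
  sSup {n | ∃ s : Finset U, s.card = n ∧ ∀ a ∈ s, ∀ b ∈ s, a ≠ b → ¬ Z.Adj a b}

/-!
A vertex of `X ⋉ Y` is adjacent to every other vertex over the same `x`, so an independent set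
meets each fibre at most once and has at most `|V(X)|` elements; it has exactly that many iff it
is the graph of a function `V(X) → V(Y)`. The graph of `f` is independent iff no edge `x ~ x'`
has `f x, f x'` equal or nonadjacent, i.e. iff `f` is a homomorphism.
-/

lemma indepNum_eq_simpleGraph_indepNum {U : Type} [Fintype U] (Z : SimpleGraph U) :
    indepNum Z = Z.indepNum := by
  unfold indepNum SimpleGraph.indepNum
  congr 1
  ext n
  exact ⟨fun ⟨s, hcard, hs⟩ => ⟨s, hs, hcard⟩, fun ⟨s, hs, hcard⟩ => ⟨s, hcard, hs⟩⟩

section homProd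

variable {V W : Type} {X : SimpleGraph V} {Y : SimpleGraph W}

lemma homProd_adj_of_fst_eq {a b : V × W} (hne : a ≠ b) (h : a.1 = b.1) :
    (homProd X Y).Adj a b :=
  ⟨hne, Or.inl h⟩

lemma SimpleGraph.IsIndepSet.injOn_fst_of_homProd {s : Set (V × W)}
    (hs : (homProd X Y).IsIndepSet s) : s.InjOn Prod.fst := fun _ ha _ hb hab =>
  by_contra fun hne => hs ha hb hne (homProd_adj_of_fst_eq hne hab)

lemma SimpleGraph.IsIndepSet.card_le_of_homProd [Fintype V] {s : Finset (V × W)}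
    (hs : (homProd X Y).IsIndepSet s) : #s ≤ Fintype.card V := by
  classical
  rw [← card_image_of_injOn hs.injOn_fst_of_homProd]
  exact card_le_univ _

lemma indepNum_homProd_le [Fintype V] [Fintype W] :
    (homProd X Y).indepNum ≤ Fintype.card V := by
  obtain ⟨s, hs⟩ := (homProd X Y).exists_isNIndepSet_indepNum
  exact hs.card_eq ▸ hs.isIndepSet.card_le_of_homProd

lemma isIndepSet_homProd_range_graph (f : X →g Y) :
    (homProd X Y).IsIndepSet (Set.range fun x => (x, f x)) := by
  rintro _ ⟨x, rfl⟩ _ ⟨x', rfl⟩ hne ⟨-, hfst | ⟨hadj, hnadj⟩⟩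
  · cases (hfst : x = x')
    exact hne rfl
  · exact hnadj (f.map_adj hadj)

lemma nonempty_hom_of_isIndepSet_homProd {s : Set (V × W)} (hs : (homProd X Y).IsIndepSet s)
    (hcover : ∀ x, ∃ y, (x, y) ∈ s) : Nonempty (X →g Y) := by
  choose f hf using hcover
  refine ⟨⟨f, fun {x x'} hadj => by_contra fun hnadj => ?_⟩⟩
  have hne : (x, f x) ≠ (x', f x') := fun h => hadj.ne (congrArg Prod.fst h)
  exact hs (hf x) (hf x') hne ⟨hne, Or.inr ⟨hadj, hnadj⟩⟩

lemma SimpleGraph.IsIndepSet.forall_exists_mem_of_homProd [Fintype V] {s : Finset (V × W)}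
    (hs : (homProd X Y).IsIndepSet s) (hcard : #s = Fintype.card V) :
    ∀ x, ∃ y, (x, y) ∈ s := by
  classical
  have himage : s.image Prod.fst = univ :=
    eq_univ_of_card _ (by rw [card_image_of_injOn hs.injOn_fst_of_homProd, hcard])
  intro x
  obtain ⟨a, ha, rfl⟩ := mem_image.mp (himage ▸ mem_univ x)
  exact ⟨a.2, ha⟩

end homProd

/-- `X → Y` iff the independence number of `X ⋉ Y` is `|V(X)|`. -/
theorem hom_iff_indepNum_homProd {V W : Type} [Fintype V] [Fintype W]
    (X : SimpleGraph V) (Y : SimpleGraph W) :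
    Nonempty (X →g Y) ↔ indepNum (homProd X Y) = Fintype.card V := by
  classical
  rw [indepNum_eq_simpleGraph_indepNum]
  constructor
  · rintro ⟨f⟩
    have hgraph : (homProd X Y).IsIndepSet ↑(univ.image fun x => (x, f x)) := by
      rw [coe_image, coe_univ, Set.image_univ]
      exact isIndepSet_homProd_range_graph f
    have hcard : #(univ.image fun x => (x, f x)) = Fintype.card V :=
      card_image_of_injective _ (fun _ _ h => congrArg Prod.fst h)
    exact indepNum_homProd_le.antisymm (hcard ▸ hgraph.card_le_indepNum)
  · intro h
    obtain ⟨s, hs⟩ := (homProd X Y).exists_isNIndepSet_indepNum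
    exact nonempty_hom_of_isIndepSet_homProd hs.isIndepSet
      (hs.isIndepSet.forall_exists_mem_of_homProd (hs.card_eq.trans h))
end

section
/- Let X and Y be finite simple graphs. There is a quantum homomorphism from X to Y if and only if there is a quantum homomorphism from the complete graph K_{|V(X)|} to the complement of the homomorphic product X ⋉ Y; moreover, for every m > |V(X)| there is no quantum homomorphism from K_m to the complement of X ⋉ Y. That is, X →q Y if and only if α_q(X ⋉ Y) = |V(X)|. -/
open Matrix Finset

/-!
A quantum homomorphism `E : X →q Y` gives one from `K_{|V(X)|}` to `(X ⋉ Y)ᶜ`: the `i`-th vertex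
of the clique uses `E` on the fibre over the `i`-th vertex of `X` and `0` elsewhere.

Conversely, let `F i (x, y)` be a quantum homomorphism from `K_m` to `(X ⋉ Y)ᶜ`. Any two vertices
of a fibre `{x} × V(Y)` are equal or adjacent in `X ⋉ Y`, so all the projectors `F i (x, y)` with
fixed `x` are pairwise orthogonal and `Q x = ∑ i y, F i (x, y)` is a projector. Since
`∑ x, Q x = m` and `Q x ≤ 1`, we get `m ≤ |V(X)|`, and if `m = |V(X)|` then every `Q x = 1`,
which makes `E x y = ∑ i, F i (x, y)` a quantum homomorphism from `X` to `Y`.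
-/

open scoped MatrixOrder

lemma OrthogonalIdempotents.isStarProjection_sum {R ι : Type*} [Semiring R] [StarRing R]
    {e : ι → R} (he : OrthogonalIdempotents e) (hsa : ∀ i, IsSelfAdjoint (e i)) (s : Finset ι) :
    IsStarProjection (∑ i ∈ s, e i) :=
  ⟨he.isIdempotentElem_sum, isSelfAdjoint_sum s fun i _ => hsa i⟩

lemma IsStarProjection.eq_one_of_sum_eq_card {R ι : Type*} [Fintype ι] [Ring R] [PartialOrder R]
    [StarRing R] [StarOrderedRing R] {Q : ι → R} (hQ : ∀ i, IsStarProjection (Q i))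
    (hsum : ∑ i, Q i = Fintype.card ι) (i : ι) : Q i = 1 := by
  have hcompl : ∑ i, (1 - Q i) = 0 := by
    simp [sum_sub_distrib, hsum]
  exact (sub_eq_zero.mp <| (sum_eq_zero_iff_of_nonneg fun i _ => (hQ i).one_sub_nonneg).mp
    hcompl i (mem_univ i)).symm

open scoped ComplexOrder in
lemma Matrix.le_of_natCast_le_natCast {n 𝕜 : Type*} [Fintype n] [DecidableEq n] [Nonempty n]
    [RCLike 𝕜] {a b : ℕ} (h : (a : Matrix n n 𝕜) ≤ b) : a ≤ b := by
  obtain ⟨i⟩ := ‹Nonempty n›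
  simpa [Matrix.natCast_apply] using (Matrix.le_iff.mp h).diag_nonneg (i := i)

structure IsQuantumHomFamily {R V W : Type*} [Ring R] [StarRing R] [Fintype W]
    (X : SimpleGraph V) (Y : SimpleGraph W) (E : V → W → R) : Prop where
  isStarProjection : ∀ x y, IsStarProjection (E x y)
  sum_eq_one : ∀ x, ∑ y, E x y = 1
  mul_eq_zero_of_ne : ∀ x y y', y ≠ y' → E x y * E x y' = 0
  mul_eq_zero_of_adj : ∀ x x' y y', X.Adj x x' → ¬ Y.Adj y y' → E x y * E x' y' = 0

lemma Matrix.isStarProjection_iff {n α : Type*} [Fintype n] [Semiring α] [StarRing α]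
    {P : Matrix n n α} : IsStarProjection P ↔ P.IsHermitian ∧ P * P = P := by
  rw [isStarProjection_iff', and_comm]
  rfl

lemma isQuantumHom_iff_exists_isQuantumHomFamily {V W : Type} [Fintype V] [Fintype W]
    (X : SimpleGraph V) (Y : SimpleGraph W) :
    IsQuantumHom X Y ↔
      ∃ d, 0 < d ∧ ∃ E : V → W → Matrix (Fin d) (Fin d) ℂ, IsQuantumHomFamily X Y E := by
  constructor
  · rintro ⟨d, hd, E, hproj, hsum, hne, hadj⟩
    exact ⟨d, hd, E, fun x y => Matrix.isStarProjection_iff.mpr (hproj x y), hsum, hne, hadj⟩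
  · rintro ⟨d, hd, E, hproj, hsum, hne, hadj⟩
    exact ⟨d, hd, E, fun x y => Matrix.isStarProjection_iff.mp (hproj x y), hsum, hne, hadj⟩

namespace IsQuantumHomFamily

variable {R : Type*} [Ring R] [StarRing R] {V W : Type} [Fintype W] {X : SimpleGraph V}
  {Y : SimpleGraph W}

lemma homProdCompl {ι : Type*} [Fintype V] [DecidableEq V] {E : V → W → R}
    (hE : IsQuantumHomFamily X Y E) (e : ι ↪ V) :
    IsQuantumHomFamily (⊤ : SimpleGraph ι) (homProd X Y)ᶜ
      (fun i z => if z.1 = e i then E z.1 z.2 else 0) where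
  isStarProjection i z := by
    split_ifs
    exacts [hE.isStarProjection _ _, .zero R]
  sum_eq_one i := by
    simp [Fintype.sum_prod_type, hE.sum_eq_one]
  mul_eq_zero_of_ne i z z' hne := by
    split_ifs with h h'
    · have hx : z.1 = z'.1 := h.trans h'.symm
      rw [hx]
      exact hE.mul_eq_zero_of_ne _ _ _ fun hy => hne (Prod.ext hx hy)
    all_goals simp
  mul_eq_zero_of_adj i j z z' hij hzz' := by
    split_ifs with h h'
    · have hx : z.1 ≠ z'.1 := by
        rw [h, h']
        exact e.injective.ne hij.ne
      have hadj : (homProd X Y).Adj z z' := by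
        by_contra hn
        exact hzz' ⟨fun heq => hx (congrArg Prod.fst heq), hn⟩
      obtain ⟨-, hx' | ⟨hX, hY⟩⟩ := hadj
      exacts [absurd hx' hx, hE.mul_eq_zero_of_adj _ _ _ _ hX hY]
    all_goals simp

section OfHomProdCompl

variable {ι : Type*} [Fintype V] {F : ι → V × W → R}
  (hF : IsQuantumHomFamily (⊤ : SimpleGraph ι) (homProd X Y)ᶜ F)
include hF

lemma mul_eq_zero_of_homProd {i j : ι} {z z' : V × W} (hne : (i, z) ≠ (j, z'))
    (hzz' : z = z' ∨ (homProd X Y).Adj z z') : F i z * F j z' = 0 := by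
  by_cases hij : i = j
  · subst hij
    exact hF.mul_eq_zero_of_ne i z z' fun h => hne (h ▸ rfl)
  · refine hF.mul_eq_zero_of_adj i j z z' hij fun hc => ?_
    rcases hzz' with h | h
    exacts [hc.1 h, hc.2 h]

lemma orthogonalIdempotents_fiber (x : V) :
    OrthogonalIdempotents fun p : ι × W => F p.1 (x, p.2) where
  idem _ := (hF.isStarProjection _ _).isIdempotentElem
  ortho p q hpq := by
    refine hF.mul_eq_zero_of_homProd (fun h => hpq (by simpa [Prod.ext_iff] using h)) ?_
    by_cases hy : p.2 = q.2
    · exact .inl (hy ▸ rfl)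
    · exact .inr ⟨fun h => hy (Prod.mk.inj h).2, .inl rfl⟩

lemma orthogonalIdempotents_index (z : V × W) : OrthogonalIdempotents fun i => F i z where
  idem _ := (hF.isStarProjection _ _).isIdempotentElem
  ortho _ _ hij := hF.mul_eq_zero_of_homProd (fun h => hij (congrArg Prod.fst h)) (.inl rfl)

variable [Fintype ι]

lemma isStarProjection_sum_fiber (x : V) : IsStarProjection (∑ p : ι × W, F p.1 (x, p.2)) :=
  (hF.orthogonalIdempotents_fiber x).isStarProjection_sum
    (fun _ => (hF.isStarProjection _ _).isSelfAdjoint) _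

lemma sum_sum_fiber : ∑ x, ∑ p : ι × W, F p.1 (x, p.2) = Fintype.card ι := by
  calc ∑ x, ∑ p : ι × W, F p.1 (x, p.2) = ∑ i, ∑ z, F i z := by
        simp only [Fintype.sum_prod_type]
        exact sum_comm
    _ = Fintype.card ι := by simp [hF.sum_eq_one]

variable [PartialOrder R] [StarOrderedRing R]

lemma natCast_card_le : (Fintype.card ι : R) ≤ Fintype.card V := by
  rw [← hF.sum_sum_fiber]
  calc _ ≤ univ.card • (1 : R) :=
        sum_le_card_nsmul _ _ _ fun x _ => (hF.isStarProjection_sum_fiber x).le_one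
    _ = Fintype.card V := by rw [card_univ, nsmul_one]

lemma of_homProdCompl (hcard : Fintype.card ι = Fintype.card V) :
    IsQuantumHomFamily X Y fun x y => ∑ i, F i (x, y) where
  isStarProjection x y := (hF.orthogonalIdempotents_index (x, y)).isStarProjection_sum
    (fun _ => (hF.isStarProjection _ _).isSelfAdjoint) _
  sum_eq_one x := by
    have hfiber := IsStarProjection.eq_one_of_sum_eq_card hF.isStarProjection_sum_fiber
      (by rw [hF.sum_sum_fiber, hcard]) x
    rwa [Fintype.sum_prod_type, sum_comm] at hfiber
  mul_eq_zero_of_ne x y y' hy := by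
    simp only [sum_mul_sum]
    exact sum_eq_zero fun i _ => sum_eq_zero fun j _ =>
      hF.mul_eq_zero_of_homProd (fun h => hy (by simp_all))
        (.inr ⟨fun h => hy (by simpa using h), .inl rfl⟩)
  mul_eq_zero_of_adj x x' y y' hX hY := by
    simp only [sum_mul_sum]
    have hne : (x, y) ≠ (x', y') := fun h => hX.ne (Prod.mk.inj h).1
    exact sum_eq_zero fun i _ => sum_eq_zero fun j _ =>
      hF.mul_eq_zero_of_homProd (fun h => hne (Prod.mk.inj h).2) (.inr ⟨hne, .inr ⟨hX, hY⟩⟩)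

end OfHomProdCompl

end IsQuantumHomFamily

/-- `X →q Y` iff `K_{|V(X)|} →q` the complement of `X ⋉ Y`; moreover no
`K_m` with `m > |V(X)|` has a quantum homomorphism to that complement.  In other words,
`X →q Y` iff `α_q(X ⋉ Y) = |V(X)|`. -/
theorem quantumHom_iff_qIndep_homProd {V W : Type} [Fintype V] [Fintype W]
    (X : SimpleGraph V) (Y : SimpleGraph W) :
    (IsQuantumHom X Y ↔
      IsQuantumHom (⊤ : SimpleGraph (Fin (Fintype.card V))) (homProd X Y)ᶜ) ∧
    (∀ m : ℕ, Fintype.card V < m →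
      ¬ IsQuantumHom (⊤ : SimpleGraph (Fin m)) (homProd X Y)ᶜ) := by
  classical
  simp only [isQuantumHom_iff_exists_isQuantumHomFamily]
  refine ⟨⟨?_, ?_⟩, ?_⟩
  · rintro ⟨d, hd, E, hE⟩
    exact ⟨d, hd, _, hE.homProdCompl (Fintype.equivFin V).symm.toEmbedding⟩
  · rintro ⟨d, hd, F, hF⟩
    exact ⟨d, hd, _, hF.of_homProdCompl (Fintype.card_fin _)⟩
  · rintro m hm ⟨d, hd, F, hF⟩
    have : Nonempty (Fin d) := ⟨⟨0, hd⟩⟩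
    have hle := Matrix.le_of_natCast_le_natCast hF.natCast_card_le
    rw [Fintype.card_fin] at hle
    omega
end

section
/- Let X and Y be finite simple graphs with |V(X)| ≥ 2, and suppose there is a quantum homomorphism from X to Y. Let Z denote the complement of the homomorphic product X ⋉ Y. Then: (i) for every α < 0 and every assignment of unit vectors u_v ∈ ℝ^m (v ∈ V(Z)) with u_v · u_{v'} = α whenever v,v' are adjacent in Z, one has 1 − 1/α ≥ |V(X)|; and (ii) there exist m ≥ 1 and unit vectors u_v ∈ ℝ^m (v ∈ V(Z)) with u_v · u_{v'} = −1/(|V(X)|−1) whenever v,v' are adjacent in Z. That is, ϑ(X ⋉ Y) = |V(X)|. -/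
open Matrix Finset

/-!
Part (i) is a positivity argument. Take projectors `E x y` witnessing `X →q Y` and put
`P (x, y) = E x y`, so that `∑ P = |V(X)| • 1`. The weight `tr (P v P v')` vanishes whenever
`v ~ v'` in `X ⋉ Y`, while for any other pair of distinct vertices `⟨u v, u v'⟩ = α`. Hence
`∑ ⟨u v, u v'⟩ tr (P v P v') = |V(X)| d (1 + α (|V(X)| - 1))`, and this is nonnegative, being a
sum of traces of squares of Hermitian matrices. Part (ii) places all of `{x} × V(Y)` at the
`x`-th vertex of a regular simplex: adjacency in the complement forces distinct first
coordinates.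
-/

open scoped ComplexOrder

section GramSum

variable {ι κ n : Type*} [Fintype ι] [Fintype κ] [Fintype n]

lemma Matrix.IsHermitian.trace_mul_self_nonneg {A : Matrix n n ℂ} (hA : A.IsHermitian) :
    0 ≤ (A * A).trace := by
  have h := (posSemidef_self_mul_conjTranspose A).trace_nonneg
  rwa [hA.eq] at h

lemma trace_sum_smul_mul_sum_smul (P : ι → Matrix n n ℂ) (c : ι → ℂ) :
    ((∑ v, c v • P v) * ∑ v, c v • P v).trace
      = ∑ v, ∑ v', c v * c v' * (P v * P v').trace := by
  simp only [Finset.sum_mul_sum, trace_sum, smul_mul_smul_comm, trace_smul, smul_eq_mul]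

/-- The sum is `∑ i, tr (M i * M i)` for the Hermitian matrices `M i = ∑ v, u v i • P v`. -/
lemma sum_inner_mul_trace_mul_nonneg (u : ι → κ → ℝ) {P : ι → Matrix n n ℂ}
    (hP : ∀ v, (P v).IsHermitian) :
    0 ≤ ∑ v, ∑ v', ((∑ i, u v i * u v' i : ℝ) : ℂ) * (P v * P v').trace := by
  set M : κ → Matrix n n ℂ := fun i => ∑ v, (u v i : ℂ) • P v
  have hM : ∀ i, (M i).IsHermitian := fun i =>
    isSelfAdjoint_sum _ fun v _ => (hP v).smul (Complex.conj_ofReal (u v i))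
  have hsum : ∑ v, ∑ v', ((∑ i, u v i * u v' i : ℝ) : ℂ) * (P v * P v').trace
      = ∑ i, (M i * M i).trace := by
    simp only [M, trace_sum_smul_mul_sum_smul]
    push_cast
    simp only [Finset.sum_mul]
    exact (Finset.sum_congr rfl fun v _ => Finset.sum_comm).trans Finset.sum_comm
  rw [hsum]
  exact Finset.sum_nonneg fun i _ => (hM i).trace_mul_self_nonneg

end GramSum

section HomProd

variable {V W : Type} {X : SimpleGraph V} {Y : SimpleGraph W}

lemma fst_ne_of_compl_homProd_adj {v v' : V × W} (h : (homProd X Y)ᶜ.Adj v v') : v.1 ≠ v'.1 :=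
  fun heq => h.2 ⟨h.1, Or.inl heq⟩

lemma mul_eq_zero_of_homProd_adj {R : Type*} [Mul R] [Zero R] {E : V → W → R}
    (horth : ∀ x y y', y ≠ y' → E x y * E x y' = 0)
    (hadj : ∀ x x' y y', X.Adj x x' → ¬ Y.Adj y y' → E x y * E x' y' = 0)
    {v v' : V × W} (h : (homProd X Y).Adj v v') : E v.1 v.2 * E v'.1 v'.2 = 0 := by
  obtain ⟨hne, hfst | ⟨hX, hY⟩⟩ := h
  · rw [← hfst]
    exact horth _ _ _ fun hsnd => hne (Prod.ext hfst hsnd)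
  · exact hadj _ _ _ _ hX hY

variable [Fintype V] [Fintype W] {d : ℕ} {E : V → W → Matrix (Fin d) (Fin d) ℂ}

lemma sum_inner_mul_trace_mul_eq (hidem : ∀ x y, E x y * E x y = E x y)
    (hsum : ∀ x, ∑ y, E x y = 1) (horth : ∀ x y y', y ≠ y' → E x y * E x y' = 0)
    (hadjE : ∀ x x' y y', X.Adj x x' → ¬ Y.Adj y y' → E x y * E x' y' = 0)
    {α : ℝ} {κ : Type*} [Fintype κ] (u : V × W → κ → ℝ) (hu : ∀ v, ∑ i, u v i * u v i = 1)
    (hadj : ∀ v v', (homProd X Y)ᶜ.Adj v v' → ∑ i, u v i * u v' i = α) :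
    ∑ v, ∑ v', ((∑ i, u v i * u v' i : ℝ) : ℂ) * (E v.1 v.2 * E v'.1 v'.2).trace
      = ((Fintype.card V * d * (1 + α * (Fintype.card V - 1)) : ℝ) : ℂ) := by
  classical
  have hEsum : ∑ v : V × W, E v.1 v.2 = (Fintype.card V : ℂ) • 1 := by
    simp only [Fintype.sum_prod_type, hsum, Finset.sum_const, Finset.card_univ,
      Nat.cast_smul_eq_nsmul]
  have hterm : ∀ v v' : V × W,
      ((∑ i, u v i * u v' i : ℝ) : ℂ) * (E v.1 v.2 * E v'.1 v'.2).trace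
      = α * (E v.1 v.2 * E v'.1 v'.2).trace
        + if v = v' then (1 - α) * (E v.1 v.2).trace else 0 := by
    intro v v'
    by_cases heq : v = v'
    · subst heq
      simp only [hu, hidem, ↓reduceIte, Complex.ofReal_one]
      ring
    by_cases hprod : (homProd X Y).Adj v v'
    · simp [mul_eq_zero_of_homProd_adj horth hadjE hprod, heq]
    · rw [hadj v v' ⟨heq, hprod⟩, if_neg heq, add_zero]
  simp only [hterm, Finset.sum_add_distrib, ← Finset.mul_sum, Finset.sum_ite_eq,
    Finset.mem_univ, if_true, ← trace_sum, ← Finset.sum_mul, hEsum]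
  simp only [Algebra.mul_smul_comm, mul_one, trace_smul, trace_one, Fintype.card_fin,
    smul_eq_mul]
  push_cast
  ring

theorem card_le_one_sub_inv_of_isQuantumHom (hq : IsQuantumHom X Y) {α : ℝ} (hα : α < 0)
    {κ : Type*} [Fintype κ] (u : V × W → κ → ℝ) (hu : ∀ v, ∑ i, u v i * u v i = 1)
    (hadj : ∀ v v', (homProd X Y)ᶜ.Adj v v' → ∑ i, u v i * u v' i = α) :
    (Fintype.card V : ℝ) ≤ 1 - 1 / α := by
  obtain ⟨d, hd, E, hE, hsum, horth, hadjE⟩ := hq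
  have hpos : 0 ≤ (Fintype.card V : ℝ) * d * (1 + α * (Fintype.card V - 1)) := by
    have h := sum_inner_mul_trace_mul_nonneg u fun v => (hE v.1 v.2).1
    rwa [sum_inner_mul_trace_mul_eq (fun x y => (hE x y).2) hsum horth hadjE u hu hadj,
      Complex.zero_le_real] at h
  have hfactor : 0 ≤ 1 + α * (Fintype.card V - 1) := by
    rcases (Fintype.card V).eq_zero_or_pos with hV | hV
    · simp only [hV, Nat.cast_zero, zero_sub]
      linarith
    · exact nonneg_of_mul_nonneg_right hpos (by positivity)
  have hinv : 1 / α < 0 := one_div_neg.2 hα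
  nlinarith [mul_nonpos_of_nonneg_of_nonpos hfactor hinv.le, mul_one_div_cancel hα.ne]

end HomProd

lemma sum_centered_indicator_mul {κ : Type*} [Fintype κ] [DecidableEq κ] (a b : κ) :
    ∑ i, ((if a = i then 1 else 0) - 1 / (Fintype.card κ : ℝ)) *
        ((if b = i then 1 else 0) - 1 / Fintype.card κ)
      = (if a = b then 1 else 0) - 1 / Fintype.card κ := by
  have hcard : (Fintype.card κ : ℝ) ≠ 0 :=
    Nat.cast_ne_zero.2 (Fintype.card_pos_iff.2 ⟨a⟩).ne'
  simp only [sub_mul, mul_sub, ite_mul, mul_ite, one_mul, mul_one, zero_mul, mul_zero,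
    Finset.sum_sub_distrib, Finset.sum_ite_eq, Finset.mem_univ, if_true, Finset.sum_const,
    Finset.card_univ, nsmul_eq_mul]
  split_ifs <;> field_simp <;> ring

/-- The vertices of a regular simplex centred at the origin, rescaled to the unit sphere. -/
theorem exists_unit_vectors_inner_eq_neg_inv {n : ℕ} (hn : 2 ≤ n) :
    ∃ w : Fin n → Fin n → ℝ, (∀ a, ∑ i, w a i * w a i = 1) ∧
      ∀ a b, a ≠ b → ∑ i, w a i * w b i = -1 / ((n : ℝ) - 1) := by
  have hn' : (1 : ℝ) < n := by exact_mod_cast hn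
  have hn1 : (n : ℝ) - 1 ≠ 0 := (sub_pos.2 hn').ne'
  set c := Real.sqrt (n / (n - 1))
  have hc : c * c = n / (n - 1) := Real.mul_self_sqrt (div_nonneg (by linarith) (by linarith))
  have hinner : ∀ a b : Fin n,
      ∑ i, c * ((if a = i then 1 else 0) - 1 / (n : ℝ)) *
          (c * ((if b = i then 1 else 0) - 1 / n))
        = n / (n - 1) * ((if a = b then 1 else 0) - 1 / n) := by
    intro a b
    have hsum := sum_centered_indicator_mul a b
    rw [Fintype.card_fin] at hsum
    rw [← hc, ← hsum, Finset.mul_sum]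
    exact Finset.sum_congr rfl fun i _ => by ring
  refine ⟨fun a i => c * ((if a = i then 1 else 0) - 1 / n), fun a => ?_, fun a b hab => ?_⟩
  · rw [hinner, if_pos rfl]
    field_simp
  · rw [hinner, if_neg hab]
    field_simp
    ring

/-- If `|V(X)| ≥ 2` and `X →q Y`, then for `Z` the complement of `X ⋉ Y`:
(i) every `α`-representation of `Z` has `1 - 1/α ≥ |V(X)|`, and
(ii) `Z` has a `(-1/(|V(X)|-1))`-representation.  That is, `ϑ(X ⋉ Y) = |V(X)|`. -/
theorem theta_homProd_eq_card {V W : Type} [Fintype V] [Fintype W]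
    (X : SimpleGraph V) (Y : SimpleGraph W)
    (hV : 2 ≤ Fintype.card V) (hq : IsQuantumHom X Y) :
    ((∀ (α : ℝ), α < 0 → ∀ m : ℕ, ∀ u : V × W → (Fin m → ℝ),
        (∀ v, ∑ i, u v i * u v i = 1) →
        (∀ v v', (homProd X Y)ᶜ.Adj v v' → ∑ i, u v i * u v' i = α) →
        (Fintype.card V : ℝ) ≤ 1 - 1 / α) ∧
      (∃ m : ℕ, 1 ≤ m ∧ ∃ u : V × W → (Fin m → ℝ),
        (∀ v, ∑ i, u v i * u v i = 1) ∧
        (∀ v v', (homProd X Y)ᶜ.Adj v v' →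
          ∑ i, u v i * u v' i = -1 / ((Fintype.card V : ℝ) - 1)))) := by
  refine ⟨fun α hα m u hu hadj => card_le_one_sub_inv_of_isQuantumHom hq hα u hu hadj, ?_⟩
  obtain ⟨w, hw_unit, hw_inner⟩ := exists_unit_vectors_inner_eq_neg_inv hV
  let e := Fintype.equivFin V
  exact ⟨Fintype.card V, by omega, fun v => w (e v.1), fun v => hw_unit _,
    fun v v' hadj => hw_inner _ _ (e.injective.ne (fst_ne_of_compl_homProd_adj hadj))⟩
end

section
/- Let X be a finite simple graph and suppose E_x ∈ M_d(ℝ) (x ∈ V(X)) are real symmetric idempotent matrices, each of rank r ≥ 1, such that E_x·E_{x'} = 0 whenever x,x' are adjacent in X (a real d/r-projective representation of X). Then there exist unit vectors v_x ∈ ℝ^{d²} (x ∈ V(X)) and a unit vector c ∈ ℝ^{d²} such that v_x · v_{x'} = 0 whenever x,x' are adjacent in X, and c · v_x = √(r/d) for every x ∈ V(X). Consequently, in Lovász's handle characterization of the theta function, ϑ̄(X) ≤ d/r, so ϑ̄(X) ≤ ξ_f(X). -/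
open Matrix Finset

/-!
Vectorize the projectors: `v x := vec (E x) / √r` and `c := vec 1 / √d`. The dot product of
vectorized matrices is `vec A ⬝ᵥ vec B = tr (Aᵀ B)`, and for symmetric idempotents `P`, `Q`
this is `tr (P Q)`. So `v x` is a unit vector because `tr (E x) = rank (E x) = r`, adjacent
vertices give orthogonal vectors because `E x E x' = 0`, `c` is a unit vector because
`tr 1 = d`, and `c ⬝ᵥ v x = tr (E x) / √(d r) = √(r / d)`.
-/

namespace Matrix

variable {n K : Type*} [Fintype n] [Field K]

theorem vec_dotProduct_vec_of_isSymm {P : Matrix n n K} (hP : P.IsSymm) (Q : Matrix n n K) :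
    vec P ⬝ᵥ vec Q = (P * Q).trace := by
  rw [vec_dotProduct_vec, hP.eq]

variable [DecidableEq n]

theorem trace_eq_rank_of_isIdempotentElem {A : Matrix n n K} (hA : IsIdempotentElem A) :
    A.trace = A.rank := by
  rw [← trace_toLin'_eq]
  exact (LinearMap.IsIdempotentElem.isProj_range _ (hA.map toLinAlgEquiv')).trace

theorem vec_dotProduct_vec_self_of_isSymm {P : Matrix n n K} (hP : P.IsSymm)
    (hP2 : IsIdempotentElem P) : vec P ⬝ᵥ vec P = P.rank := by
  rw [vec_dotProduct_vec_of_isSymm hP, hP2.eq, trace_eq_rank_of_isIdempotentElem hP2]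

theorem vec_one_dotProduct_vec_of_isIdempotentElem {P : Matrix n n K} (hP : IsIdempotentElem P) :
    vec 1 ⬝ᵥ vec P = P.rank := by
  rw [vec_dotProduct_vec_of_isSymm isSymm_one, one_mul, trace_eq_rank_of_isIdempotentElem hP]

theorem vec_one_dotProduct_vec_one : vec (1 : Matrix n n K) ⬝ᵥ vec 1 = Fintype.card n := by
  rw [vec_one_dotProduct_vec_of_isIdempotentElem IsIdempotentElem.one, rank_one]

end Matrix

/-- From a real `d/r`-projective representation of `X` one obtains unit
vectors `v x ∈ ℝ^{d²}` (orthogonal for adjacent vertices) together with a unit handle `c`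
satisfying `c · v x = √(r/d)`; consequently `ϑ̄(X) ≤ d/r`, so `ϑ̄(X) ≤ ξ_f(X)`. -/
theorem handle_of_real_projRep {V : Type} [Fintype V]
    (X : SimpleGraph V) (d r : ℕ) (hd : 1 ≤ d) (hr : 1 ≤ r)
    (E : V → Matrix (Fin d) (Fin d) ℝ)
    (hE : ∀ x, (E x).IsSymm ∧ E x * E x = E x ∧ (E x).rank = r)
    (hadj : ∀ x x', X.Adj x x' → E x * E x' = 0) :
    ∃ (v : V → (Fin d × Fin d → ℝ)) (c : Fin d × Fin d → ℝ),
      (∀ x, ∑ i, v x i * v x i = 1) ∧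
      (∑ i, c i * c i = 1) ∧
      (∀ x x', X.Adj x x' → ∑ i, v x i * v x' i = 0) ∧
      (∀ x, ∑ i, c i * v x i = Real.sqrt ((r : ℝ) / d)) := by
  have hr0 : (0 : ℝ) < r := by exact_mod_cast hr
  have hd0 : (0 : ℝ) < d := by exact_mod_cast hd
  refine ⟨fun x => (√r)⁻¹ • vec (E x), (√d)⁻¹ • vec 1, fun x => ?_, ?_, fun x x' h => ?_,
    fun x => ?_⟩
  all_goals
    change (_ ⬝ᵥ _) = _
    simp only [smul_dotProduct, dotProduct_smul, smul_eq_mul]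
  · rw [vec_dotProduct_vec_self_of_isSymm (hE x).1 (hE x).2.1, (hE x).2.2]
    field_simp
    exact (Real.sq_sqrt hr0.le).symm
  · rw [vec_one_dotProduct_vec_one, Fintype.card_fin]
    field_simp
    exact (Real.sq_sqrt hd0.le).symm
  · rw [vec_dotProduct_vec_of_isSymm (hE x).1, hadj x x' h, trace_zero, mul_zero, mul_zero]
  · rw [vec_one_dotProduct_vec_of_isIdempotentElem (hE x).2.1, (hE x).2.2, Real.sqrt_div' _ hd0.le]
    field_simp
    exact (Real.sq_sqrt hr0.le).symm
end

section
/- Let X be a vertex-transitive finite simple graph with n vertices, and let m ≥ 1 be such that there is a quantum homomorphism from the complete graph K_m to the complement of X. Then X has a projective representation of value n/m: there exist integers d, r ≥ 1 with d·m = n·r and rank-r complex d×d projectors F_x (x ∈ V(X)) such that F_x·F_{x'} = 0 whenever x,x' are adjacent in X. Consequently ξ_f(X) ≤ |V(X)|/α_q(X). -/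
open Matrix Finset

/-!
Summing the projectors `E i v` of a quantum homomorphism `K_m →q X̄` over the vertices `i` of
`K_m` gives a projector `Q v` for every vertex `v` of `X`; the quantum-homomorphism relations make
`Q v Q v' = 0` for adjacent `v, v'`, and since `∑_v E i v = 1` the ranks of the `Q v` add up to
`m d`. These ranks may differ, but the direct sum of the `Q ∘ g` over all automorphisms `g` of `X`
has rank `∑_g rank Q (g v)` at `v`, which vertex transitivity makes independent of `v`. Summing
over `v` gives `d |Aut X| m = |V| r`.
-/

namespace IsStarProjection

variable {R ι : Type*} [NonUnitalNonAssocSemiring R] [StarRing R]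

theorem sum {s : Finset ι} {p : ι → R} (hp : ∀ i ∈ s, IsStarProjection (p i))
    (horth : ∀ i ∈ s, ∀ j ∈ s, i ≠ j → p i * p j = 0) :
    IsStarProjection (∑ i ∈ s, p i) where
  isSelfAdjoint := isSelfAdjoint_sum s fun i hi => (hp i hi).isSelfAdjoint
  isIdempotentElem := by
    rw [IsIdempotentElem, Finset.sum_mul_sum]
    refine Finset.sum_congr rfl fun i hi => ?_
    rw [Finset.sum_eq_single_of_mem i hi fun j hj hji => horth i hi j hj hji.symm]
    exact (hp i hi).isIdempotentElem

end IsStarProjection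

namespace Matrix

variable {n o α : Type*} [Fintype n] [DecidableEq o]

theorem isStarProjection_blockDiagonal [Fintype o] [NonUnitalNonAssocSemiring α] [StarRing α]
    {M : o → Matrix n n α} (hM : ∀ i, IsStarProjection (M i)) :
    IsStarProjection (blockDiagonal M) where
  isIdempotentElem := by
    rw [IsIdempotentElem, ← blockDiagonal_mul]
    exact congrArg blockDiagonal (funext fun i => (hM i).isIdempotentElem)
  isSelfAdjoint := by
    rw [IsSelfAdjoint, star_eq_conjTranspose, blockDiagonal_conjTranspose]
    exact congrArg blockDiagonal (funext fun i => (hM i).isSelfAdjoint)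

theorem rank_eq_trace_of_isIdempotentElem {K : Type*} [Field K] [DecidableEq n]
    {A : Matrix n n K} (hA : IsIdempotentElem A) : (A.rank : K) = A.trace := by
  have hlin : IsIdempotentElem (toLin' A) := hA.map toLinAlgEquiv'
  rw [← trace_toLin'_eq, (LinearMap.IsIdempotentElem.isProj_range _ hlin).trace, toLin'_apply']
  rfl

theorem rank_blockDiagonal_of_isIdempotentElem [Fintype o] {K : Type*} [Field K] [CharZero K]
    [DecidableEq n] {M : o → Matrix n n K} (hM : ∀ i, IsIdempotentElem (M i)) :
    (blockDiagonal M).rank = ∑ i, (M i).rank := by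
  have hB : IsIdempotentElem (blockDiagonal M) := by
    rw [IsIdempotentElem, ← blockDiagonal_mul]
    exact congrArg blockDiagonal (funext fun i => hM i)
  have hcast : ((blockDiagonal M).rank : K) = ∑ i, ((M i).rank : K) := by
    simp only [rank_eq_trace_of_isIdempotentElem hB, rank_eq_trace_of_isIdempotentElem (hM _),
      trace_blockDiagonal]
  exact_mod_cast hcast

end Matrix

namespace SimpleGraph

variable {V W : Type*}

/-- A projective representation of `X` whose projectors need not all have the same rank. -/
structure IsProjectorRep {R : Type*} [Mul R] [Star R] [Zero R] (X : SimpleGraph V)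
    (F : V → R) : Prop where
  isStarProjection : ∀ x, IsStarProjection (F x)
  mul_eq_zero_of_adj : ∀ ⦃x x'⦄, X.Adj x x' → F x * F x' = 0

namespace IsProjectorRep

variable {X : SimpleGraph V} {Y : SimpleGraph W}

theorem comp {R : Type*} [Mul R] [Star R] [Zero R] {F : W → R} (hF : Y.IsProjectorRep F)
    (φ : X →g Y) : X.IsProjectorRep (F ∘ φ) where
  isStarProjection x := hF.isStarProjection (φ x)
  mul_eq_zero_of_adj _ _ h := hF.mul_eq_zero_of_adj (φ.map_adj h)

variable {n o α : Type*} [Fintype n] [NonUnitalNonAssocSemiring α] [StarRing α]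

theorem blockDiagonal [Fintype o] [DecidableEq o] {F : o → V → Matrix n n α}
    (hF : ∀ i, X.IsProjectorRep (F i)) :
    X.IsProjectorRep fun x => Matrix.blockDiagonal fun i => F i x where
  isStarProjection x := Matrix.isStarProjection_blockDiagonal fun i => (hF i).isStarProjection x
  mul_eq_zero_of_adj x x' h := by
    rw [← Matrix.blockDiagonal_mul, ← Matrix.blockDiagonal_zero]
    exact congrArg Matrix.blockDiagonal (funext fun i => (hF i).mul_eq_zero_of_adj h)

theorem reindex [Fintype o] {F : V → Matrix n n α} (hF : X.IsProjectorRep F) (e : n ≃ o) :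
    X.IsProjectorRep fun x => Matrix.reindex e e (F x) where
  isStarProjection x := by
    refine ⟨?_, ?_⟩
    · rw [IsIdempotentElem, Matrix.reindex_apply, Matrix.submatrix_mul_equiv,
        (hF.isStarProjection x).isIdempotentElem.eq]
    · rw [IsSelfAdjoint, Matrix.star_eq_conjTranspose, Matrix.conjTranspose_reindex,
        ← Matrix.star_eq_conjTranspose, (hF.isStarProjection x).isSelfAdjoint.star_eq]
  mul_eq_zero_of_adj x x' h := by
    rw [Matrix.reindex_apply, Matrix.reindex_apply, Matrix.submatrix_mul_equiv,
      hF.mul_eq_zero_of_adj h]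
    rfl

end IsProjectorRep

end SimpleGraph

theorem IsQuantumHom.exists_isProjectorRep_compl {ι V : Type} [Fintype ι] [Fintype V]
    {X : SimpleGraph V} (hq : IsQuantumHom (⊤ : SimpleGraph ι) Xᶜ) :
    ∃ d : ℕ, 0 < d ∧ ∃ Q : V → Matrix (Fin d) (Fin d) ℂ,
      X.IsProjectorRep Q ∧ ∑ v, (Q v).rank = Fintype.card ι * d := by
  obtain ⟨d, hd, E, hE, hsum, horth, hadj⟩ := hq
  have hQ : X.IsProjectorRep fun v => ∑ i, E i v := by
    refine ⟨fun v => IsStarProjection.sum (fun i _ => ⟨(hE i v).2, (hE i v).1⟩)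
      fun i _ j _ hij => hadj i j v v (by simpa using hij) (Xᶜ.loopless.irrefl v), fun v v' h => ?_⟩
    rw [Finset.sum_mul_sum]
    refine Finset.sum_eq_zero fun i _ => Finset.sum_eq_zero fun j _ => ?_
    obtain rfl | hij := eq_or_ne i j
    · exact horth i v v' h.ne
    · exact hadj i j v v' (by simpa using hij) (by simp [h])
  refine ⟨d, hd, _, hQ, ?_⟩
  have htrace : ∑ v, ((∑ i, E i v).rank : ℂ) = Fintype.card ι * d := by
    simp_rw [rank_eq_trace_of_isIdempotentElem (hQ.isStarProjection _).isIdempotentElem, trace_sum]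
    rw [Finset.sum_comm]
    simp [← trace_sum, hsum]
  exact_mod_cast htrace

section Automorphisms

variable {V M : Type*} [AddCommMonoid M]

theorem sum_aut_apply_eq_of_transitive {X : SimpleGraph V} [Fintype (X ≃g X)]
    (hX : ∀ u v : V, ∃ φ : X ≃g X, φ u = v) (f : V → M) (u v : V) :
    ∑ g : X ≃g X, f (g u) = ∑ g : X ≃g X, f (g v) := by
  obtain ⟨ψ, rfl⟩ := hX v u
  exact Fintype.sum_equiv (Equiv.mulRight ψ) _ _ fun g => rfl

theorem sum_sum_aut_apply [Fintype V] (X : SimpleGraph V) [Fintype (X ≃g X)] (f : V → M) :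
    ∑ v, ∑ g : X ≃g X, f (g v) = Fintype.card (X ≃g X) • ∑ v, f v := by
  rw [Finset.sum_comm, ← Finset.card_univ, ← Finset.sum_const]
  exact Finset.sum_congr rfl fun g _ => Equiv.sum_comp g.toEquiv f

end Automorphisms

theorem SimpleGraph.IsProjectorRep.exists_rank_eq_of_transitive {V K n : Type*} [Fintype V]
    [Nonempty V] [Field K] [StarRing K] [CharZero K] [Fintype n] [DecidableEq n]
    {X : SimpleGraph V} [Fintype (X ≃g X)] [DecidableEq (X ≃g X)] {Q : V → Matrix n n K}
    (hQ : X.IsProjectorRep Q) (hX : ∀ u v : V, ∃ φ : X ≃g X, φ u = v) :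
    ∃ F : V → Matrix (n × (X ≃g X)) (n × (X ≃g X)) K, X.IsProjectorRep F ∧
      ∃ r, (∀ v, (F v).rank = r) ∧
        Fintype.card V * r = Fintype.card (X ≃g X) * ∑ v, (Q v).rank := by
  let F v := Matrix.blockDiagonal fun g : X ≃g X => Q (g v)
  have hFrank v : (F v).rank = ∑ g : X ≃g X, (Q (g v)).rank :=
    rank_blockDiagonal_of_isIdempotentElem fun g => (hQ.isStarProjection (g v)).isIdempotentElem
  obtain ⟨v₀⟩ := ‹Nonempty V›
  have hr v : (F v).rank = (F v₀).rank := by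
    rw [hFrank, hFrank]
    exact sum_aut_apply_eq_of_transitive hX (fun u => (Q u).rank) v v₀
  refine ⟨F, .blockDiagonal fun g => hQ.comp g.toHom, _, hr, ?_⟩
  calc Fintype.card V * (F v₀).rank = ∑ v, (F v).rank := by simp [hr]
    _ = Fintype.card (X ≃g X) * ∑ v, (Q v).rank := by
      simp only [hFrank]
      exact sum_sum_aut_apply X fun v => (Q v).rank

/-- If `X` is vertex transitive on `n` vertices and `K_m →q X̄`, then `X`
has a projective representation of value `n/m`; consequently `ξ_f(X) ≤ |V(X)|/α_q(X)`. -/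
theorem projRep_of_qIndep {V : Type} [Fintype V]
    (X : SimpleGraph V) (hX : ∀ u v : V, ∃ φ : X ≃g X, φ u = v)
    (m : ℕ) (hm : 1 ≤ m)
    (hq : IsQuantumHom (⊤ : SimpleGraph (Fin m)) Xᶜ) :
    ∃ d r : ℕ, 1 ≤ d ∧ 1 ≤ r ∧ d * m = Fintype.card V * r ∧
      ∃ F : V → Matrix (Fin d) (Fin d) ℂ,
        (∀ x, (F x).IsHermitian ∧ F x * F x = F x ∧ (F x).rank = r) ∧
        (∀ x x', X.Adj x x' → F x * F x' = 0) := by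
  classical
  obtain ⟨d₀, hd₀, Q, hQ, hQrank⟩ := hq.exists_isProjectorRep_compl
  have : Nonempty V := by
    obtain ⟨v, -, -⟩ := Finset.exists_ne_zero_of_sum_ne_zero <| hQrank.trans_ne <| by
      simp only [Fintype.card_fin]
      positivity
    exact ⟨v⟩
  have : Fintype (X ≃g X) := Fintype.ofInjective _ RelIso.toEquiv_injective
  obtain ⟨F, hF, r, hr, hcount⟩ := hQ.exists_rank_eq_of_transitive hX
  have hdm : Fintype.card (Fin d₀ × (X ≃g X)) * m = Fintype.card V * r := by
    rw [hcount, hQrank, Fintype.card_prod, Fintype.card_fin, Fintype.card_fin]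
    ring
  have hd : 0 < Fintype.card (Fin d₀ × (X ≃g X)) := Fintype.card_pos_iff.mpr ⟨(⟨0, hd₀⟩, 1)⟩
  let e := Fintype.equivFin (Fin d₀ × (X ≃g X))
  refine ⟨_, r, hd, Nat.pos_of_mul_pos_left (hdm ▸ Nat.mul_pos hd hm), hdm,
    fun v => Matrix.reindex e e (F v), fun v => ?_, (hF.reindex e).mul_eq_zero_of_adj⟩
  obtain ⟨hidem, hsa⟩ := (hF.reindex e).isStarProjection v
  exact ⟨hsa, hidem, (Matrix.rank_reindex e e _).trans (hr v)⟩
end
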